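/- arXiv:2605.19129 — 13 statements merged into one kernel-verified Lean document; each statement's English description precedes it below -/
import Mathlib

section
/- If P is a correlated equilibrium of a finite normal-form game Γ, then for every player i the correlated optimin performance equals the ordinary expected payoff: π_i(P) = Σ_{a∈A} P(a) u_i(a). -/
open Finset

variable {I : Type*} [Fintype I] [DecidableEq I] [Nonempty I]
variable {A : I → Type*} [∀ i, Fintype (A i)] [∀ i, DecidableEq (A i)]
  [∀ i, Nonempty (A i)]

/-- The unnormalized gain of player `j` from switching to `b` after receiving
recommendation `r`:  `Σ_{a_{-j}} P(r, a_{-j}) · [u_j(b, a_{-j}) − u_j(r, a_{-j})]`. -/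
noncomputable def gain (u : I → (∀ i, A i) → ℝ) (P : (∀ i, A i) → ℝ)
    (j : I) (r b : A j) : ℝ :=
  ∑ a : ∀ i, A i,
    if a j = r then P a * (u j (Function.update a j b) - u j a) else 0

/-- `δ` is an admissible recommendation-contingent deviation profile for the opponents
of player `i`: each `δ j r` lies in `B_j^P(r) = {r} ∪ {b : gain > 0}`. -/
def Admissible (u : I → (∀ i, A i) → ℝ) (P : (∀ i, A i) → ℝ) (i : I)
    (δ : ∀ j, A j → A j) : Prop :=
  ∀ j, j ≠ i → ∀ r : A j, δ j r = r ∨ 0 < gain u P j r (δ j r)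

/-- The action profile `(a_i, δ_{-i}(a_{-i}))`. -/
def applyDev (i : I) (δ : ∀ j, A j → A j) (a : ∀ j, A j) : ∀ j, A j :=
  fun j => if j = i then a j else δ j (a j)

/-- Correlated optimin performance of player `i` at `P`:
`π_i(P) = min_{δ_{-i} ∈ B_{-i}^P} Σ_a P(a) u_i(a_i, δ_{-i}(a_{-i}))`. -/
noncomputable def perf (u : I → (∀ i, A i) → ℝ) (P : (∀ i, A i) → ℝ) (i : I) : ℝ :=
  sInf {x | ∃ δ : ∀ j, A j → A j, Admissible u P i δ ∧
    x = ∑ a : ∀ j, A j, P a * u i (applyDev i δ a)}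

/-- Correlated equilibrium: for every player `i` and all `r, b ∈ A_i`,
`Σ_{a_{-i}} P(r, a_{-i}) · [u_i(r, a_{-i}) − u_i(b, a_{-i})] ≥ 0`. -/
def IsCE (u : I → (∀ i, A i) → ℝ) (P : (∀ i, A i) → ℝ) : Prop :=
  ∀ i : I, ∀ r b : A i,
    0 ≤ ∑ a : ∀ j, A j,
      if a i = r then P a * (u i a - u i (Function.update a i b)) else 0

/-- at a correlated equilibrium, the correlated optimin performance of
every player equals the ordinary expected payoff. -/
theorem perf_eq_expected_of_CE
    (u : I → (∀ i, A i) → ℝ) (P : (∀ i, A i) → ℝ)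
    (hP : P ∈ stdSimplex ℝ (∀ i, A i)) (hCE : IsCE u P) (i : I) :
    perf u P i = ∑ a : ∀ j, A j, P a * u i a := by
  have hgain : ∀ (j : I) (r b : A j), gain u P j r b ≤ 0 := by
    intro j r b
    have h := hCE j r b
    have : gain u P j r b = -∑ a : ∀ k, A k,
        (if a j = r then P a * (u j a - u j (Function.update a j b)) else 0) := by
      rw [← Finset.sum_neg_distrib]
      apply Finset.sum_congr rfl
      intro a _
      by_cases h : a j = r <;> simp [h, gain] <;> ring
    rw [this]
    linarith
  have hset : {x | ∃ δ : ∀ j, A j → A j, Admissible u P i δ ∧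
      x = ∑ a : ∀ j, A j, P a * u i (applyDev i δ a)}
      = {∑ a : ∀ j, A j, P a * u i a} := by
    ext x
    simp only [Set.mem_setOf_eq, Set.mem_singleton_iff]
    constructor
    · rintro ⟨δ, hδ, rfl⟩
      apply Finset.sum_congr rfl
      intro a _
      congr 1
      have : applyDev i δ a = a := by
        funext j
        by_cases hj : j = i
        · simp [applyDev, hj]
        · have := hδ j hj (a j)
          rcases this with h | h
          · simp [applyDev, hj, h]
          · exact absurd h (not_lt.mpr (hgain j (a j) (δ j (a j))))
      rw [this]
    · rintro rfl
      exact ⟨fun j r => r, fun j _ r => Or.inl rfl, by unfold applyDev; simp⟩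
  rw [perf, hset, csInf_singleton]
end

section
/- For every player i of a finite normal-form game Γ, the function P ↦ π_i(P) is upper semicontinuous on the probability simplex Δ(A). -/
open Finset

variable {I : Type*} [Fintype I] [DecidableEq I] [Nonempty I]
variable {A : I → Type*} [∀ i, Fintype (A i)] [∀ i, DecidableEq (A i)]
  [∀ i, Nonempty (A i)]

/-!
The value `π_i(P)` is the minimum, over the finitely many deviation profiles `δ`, of the linear
functions `P ↦ Σ_a P(a) u_i(a_i, δ(a_{-i}))`, where `δ` competes only at those `P` at which it is
admissible. Admissibility is a finite conjunction of conditions that are either independent of `P`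
or strict inequalities between continuous functions of `P`, so it holds on an open set, and a
minimum of finitely many continuous functions, each competing on an open set, can only jump down.
Upper semicontinuity thus holds on all of `ℝ^A`, not only on the simplex.
-/

theorem upperSemicontinuous_sInf_of_isOpen {X ι β : Type*} [TopologicalSpace X] [Finite ι]
    [ConditionallyCompleteLinearOrder β] {f : ι → X → β} {U : ι → Set X}
    (hf : ∀ k, UpperSemicontinuous (f k)) (hU : ∀ k, IsOpen (U k))
    (hcover : ∀ x, ∃ k, x ∈ U k) :
    UpperSemicontinuous fun x => sInf {y | ∃ k, x ∈ U k ∧ y = f k x} := by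
  intro x y hy
  obtain ⟨k₀, hk₀⟩ := hcover x
  have hne : {y | ∃ k, x ∈ U k ∧ y = f k x}.Nonempty := ⟨_, k₀, hk₀, rfl⟩
  obtain ⟨_, ⟨k, hxk, rfl⟩, hky⟩ := exists_lt_of_csInf_lt hne hy
  filter_upwards [hf k x y hky, (hU k).mem_nhds hxk] with x' hlt hmem
  have hfin : {y | ∃ k, x' ∈ U k ∧ y = f k x'}.Finite :=
    (Set.finite_range fun k => f k x').subset fun _ ⟨k, _, hk⟩ => ⟨k, hk.symm⟩
  exact (csInf_le hfin.bddBelow ⟨k, hmem, rfl⟩).trans_lt hlt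

section

variable {N : Type*} [Fintype N] [DecidableEq N] {S : N → Type*} [∀ j, Fintype (S j)]
  [∀ j, DecidableEq (S j)] (u : N → (∀ j, S j) → ℝ)

theorem continuous_gain (j : N) (r b : S j) : Continuous fun P => gain u P j r b := by
  unfold gain
  refine continuous_finsetSum _ fun a _ => ?_
  split_ifs
  · exact (continuous_apply a).mul continuous_const
  · exact continuous_const

theorem isOpen_setOf_admissible (i : N) (δ : ∀ j, S j → S j) :
    IsOpen {P | Admissible u P i δ} := by
  simp only [Admissible, Set.ofPred_forall, Set.ofPred_or]
  exact isOpen_iInter_of_finite fun j => isOpen_iInter_of_finite fun _ =>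
    isOpen_iInter_of_finite fun r =>
      isOpen_const.union (isOpen_lt continuous_const (continuous_gain u j r (δ j r)))

theorem admissible_id (P : (∀ j, S j) → ℝ) (i : N) : Admissible u P i fun _ r => r :=
  fun _ _ _ => Or.inl rfl

theorem perf_upperSemicontinuous (i : N) : UpperSemicontinuous fun P => perf u P i :=
  upperSemicontinuous_sInf_of_isOpen
    (fun _ => (continuous_finsetSum _ fun a _ =>
      (continuous_apply a).mul continuous_const).upperSemicontinuous)
    (isOpen_setOf_admissible u i) fun P => ⟨_, admissible_id u P i⟩

end

/-- for every player `i`, the correlated optimin performance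
`P ↦ π_i(P)` is upper semicontinuous on the probability simplex `Δ(A)`. -/
theorem perf_upperSemicontinuousOn
    (u : I → (∀ i, A i) → ℝ) (i : I) :
    UpperSemicontinuousOn (fun P : (∀ i, A i) → ℝ => perf u P i)
      (stdSimplex ℝ (∀ i, A i)) :=
  (perf_upperSemicontinuous u i).upperSemicontinuousOn _
end

section
/- In a finite two-player zero-sum game with payoff u to player 1, the correlated optimin performances admit the closed forms π_1(P) = Σ_{a_2∈A_2} min_{b_2∈A_2} Σ_{a_1∈A_1} P(a_1,a_2) u(a_1,b_2) and π_2(P) = − Σ_{a_1∈A_1} max_{b_1∈A_1} Σ_{a_2∈A_2} P(a_1,a_2) u(b_1,a_2), for every correlated distribution P. -/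
open Finset

variable {A1 A2 : Type*} [Fintype A1] [Fintype A2] [DecidableEq A1] [DecidableEq A2]

/-- Player 1's unnormalized gain from switching recommendation `r` to `b`:
`Σ_{a_2} P(r, a_2) · [u_1(b, a_2) − u_1(r, a_2)]`. -/
noncomputable def gain1 (u1 : A1 × A2 → ℝ) (P : A1 × A2 → ℝ) (r b : A1) : ℝ :=
  ∑ a2 : A2, P (r, a2) * (u1 (b, a2) - u1 (r, a2))

/-- Player 2's unnormalized gain from switching recommendation `r` to `b`:
`Σ_{a_1} P(a_1, r) · [u_2(a_1, b) − u_2(a_1, r)]`. -/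
noncomputable def gain2 (u2 : A1 × A2 → ℝ) (P : A1 × A2 → ℝ) (r b : A2) : ℝ :=
  ∑ a1 : A1, P (a1, r) * (u2 (a1, b) - u2 (a1, r))

/-- Correlated optimin performance of player 1: the minimum of
`Σ_a P(a) u_1(a_1, δ(a_2))` over admissible recommendation-contingent rules
`δ` of player 2, i.e. `δ r ∈ B_2^P(r) = {r} ∪ {b : gain2 > 0}` for each `r`. -/
noncomputable def perf1 (u1 u2 : A1 × A2 → ℝ) (P : A1 × A2 → ℝ) : ℝ :=
  sInf {x | ∃ δ : A2 → A2,
    (∀ r : A2, δ r = r ∨ 0 < gain2 u2 P r (δ r)) ∧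
    x = ∑ a : A1 × A2, P a * u1 (a.1, δ a.2)}

/-- Correlated optimin performance of player 2. -/
noncomputable def perf2 (u1 u2 : A1 × A2 → ℝ) (P : A1 × A2 → ℝ) : ℝ :=
  sInf {x | ∃ δ : A1 → A1,
    (∀ r : A1, δ r = r ∨ 0 < gain1 u1 P r (δ r)) ∧
    x = ∑ a : A1 × A2, P a * u2 (δ a.1, a.2)}

/-- Correlated equilibrium of the two-player game `(u1, u2)`. -/
def IsCE2 (u1 u2 : A1 × A2 → ℝ) (P : A1 × A2 → ℝ) : Prop :=
  (∀ r b : A1, 0 ≤ ∑ a2 : A2, P (r, a2) * (u1 (r, a2) - u1 (b, a2))) ∧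
  (∀ r b : A2, 0 ≤ ∑ a1 : A1, P (a1, r) * (u2 (a1, r) - u2 (a1, b)))

/-- closed forms of the correlated optimin performances in a finite
two-player zero-sum game with payoff `u` to player 1 and `−u` to player 2. -/
theorem zeroSum_perf_closed_form
    [Nonempty A1] [Nonempty A2] (u : A1 × A2 → ℝ)
    (P : A1 × A2 → ℝ) (hP : P ∈ stdSimplex ℝ (A1 × A2)) :
    perf1 u (fun a => -u a) P =
      ∑ a2 : A2, (Finset.univ : Finset A2).inf' Finset.univ_nonempty
        (fun b2 => ∑ a1 : A1, P (a1, a2) * u (a1, b2)) ∧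
    perf2 u (fun a => -u a) P =
      - ∑ a1 : A1, (Finset.univ : Finset A1).sup' Finset.univ_nonempty
        (fun b1 => ∑ a2 : A2, P (a1, a2) * u (b1, a2)) :=  by
  classical
  constructor
  · -- perf1
    set S : A2 → A2 → ℝ := fun r b => ∑ a1 : A1, P (a1, r) * u (a1, b) with hS
    have hgain : ∀ r b : A2, gain2 (fun a => -u a) P r b = S r r - S r b := by
      intro r b
      simp only [gain2, hS, ← Finset.sum_sub_distrib]
      congr 1; funext a1; ring
    have hsum : ∀ δ : A2 → A2,
        (∑ a : A1 × A2, P a * u (a.1, δ a.2)) = ∑ r : A2, S r (δ r) := by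
      intro δ
      rw [Fintype.sum_prod_type, Finset.sum_comm]
    have hmin : ∀ r : A2, ∃ b : A2,
        (Finset.univ : Finset A2).inf' Finset.univ_nonempty (S r) = S r b := by
      intro r
      obtain ⟨b, _, hb⟩ := Finset.exists_mem_eq_inf' (Finset.univ_nonempty) (S r)
      exact ⟨b, hb⟩
    choose c hc using hmin
    set δ0 : A2 → A2 := fun r => if S r (c r) < S r r then c r else r with hδ0
    have hδval : ∀ r : A2, S r (δ0 r) =
        (Finset.univ : Finset A2).inf' Finset.univ_nonempty (S r) := by
      intro r
      by_cases h : S r (c r) < S r r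
      · simp only [hδ0, if_pos h]; exact (hc r).symm
      · simp only [hδ0, if_neg h]
        have h1 : (Finset.univ : Finset A2).inf' Finset.univ_nonempty (S r) ≤ S r r :=
          Finset.inf'_le _ (Finset.mem_univ r)
        rw [hc r] at h1
        have := not_lt.mp h
        rw [hc r]; linarith
    have hmem : (∑ r : A2, (Finset.univ : Finset A2).inf' Finset.univ_nonempty (S r)) ∈
        {x | ∃ δ : A2 → A2,
          (∀ r : A2, δ r = r ∨ 0 < gain2 (fun a => -u a) P r (δ r)) ∧
          x = ∑ a : A1 × A2, P a * u (a.1, δ a.2)} := by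
      refine ⟨δ0, fun r => ?_, ?_⟩
      · by_cases h : S r (c r) < S r r
        · right
          rw [hgain]
          simp only [hδ0, if_pos h]
          linarith
        · left; simp only [hδ0, if_neg h]
      · rw [hsum]
        exact (Finset.sum_congr rfl fun r _ => (hδval r).symm)
    have hlb : ∀ x ∈ {x | ∃ δ : A2 → A2,
          (∀ r : A2, δ r = r ∨ 0 < gain2 (fun a => -u a) P r (δ r)) ∧
          x = ∑ a : A1 × A2, P a * u (a.1, δ a.2)},
        (∑ r : A2, (Finset.univ : Finset A2).inf' Finset.univ_nonempty (S r)) ≤ x := by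
      rintro x ⟨δ, -, rfl⟩
      rw [hsum]
      exact Finset.sum_le_sum fun r _ => Finset.inf'_le _ (Finset.mem_univ (δ r))
    refine le_antisymm (csInf_le ⟨_, hlb⟩ hmem) (le_csInf ⟨_, hmem⟩ hlb)
  · -- perf2
    set T : A1 → A1 → ℝ := fun r b => ∑ a2 : A2, P (r, a2) * u (b, a2) with hT
    have hgain : ∀ r b : A1, gain1 u P r b = T r b - T r r := by
      intro r b
      simp only [gain1, hT, ← Finset.sum_sub_distrib]
      congr 1; funext a2; ring
    have hsum : ∀ δ : A1 → A1,
        (∑ a : A1 × A2, P a * -u (δ a.1, a.2)) = -∑ r : A1, T r (δ r) := by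
      intro δ
      rw [Fintype.sum_prod_type, ← Finset.sum_neg_distrib]
      refine Finset.sum_congr rfl fun r _ => ?_
      rw [hT, ← Finset.sum_neg_distrib]
      refine Finset.sum_congr rfl fun a2 _ => by ring
    have hmax : ∀ r : A1, ∃ b : A1,
        (Finset.univ : Finset A1).sup' Finset.univ_nonempty (T r) = T r b := by
      intro r
      obtain ⟨b, _, hb⟩ := Finset.exists_mem_eq_sup' (Finset.univ_nonempty) (T r)
      exact ⟨b, hb⟩
    choose c hc using hmax
    set δ0 : A1 → A1 := fun r => if T r r < T r (c r) then c r else r with hδ0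
    have hδval : ∀ r : A1, T r (δ0 r) =
        (Finset.univ : Finset A1).sup' Finset.univ_nonempty (T r) := by
      intro r
      by_cases h : T r r < T r (c r)
      · simp only [hδ0, if_pos h]; exact (hc r).symm
      · simp only [hδ0, if_neg h]
        have h1 : T r r ≤ (Finset.univ : Finset A1).sup' Finset.univ_nonempty (T r) :=
          Finset.le_sup' _ (Finset.mem_univ r)
        rw [hc r] at h1
        have := not_lt.mp h
        rw [hc r]; linarith
    have hmem : (-∑ r : A1, (Finset.univ : Finset A1).sup' Finset.univ_nonempty (T r)) ∈
        {x | ∃ δ : A1 → A1,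
          (∀ r : A1, δ r = r ∨ 0 < gain1 u P r (δ r)) ∧
          x = ∑ a : A1 × A2, P a * (fun a => -u a) (δ a.1, a.2)} := by
      refine ⟨δ0, fun r => ?_, ?_⟩
      · by_cases h : T r r < T r (c r)
        · right
          rw [hgain]
          simp only [hδ0, if_pos h]
          linarith
        · left; simp only [hδ0, if_neg h]
      · show _ = ∑ a : A1 × A2, P a * -u (δ0 a.1, a.2)
        rw [hsum]
        congr 1
        exact (Finset.sum_congr rfl fun r _ => (hδval r).symm)
    have hlb : ∀ x ∈ {x | ∃ δ : A1 → A1,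
          (∀ r : A1, δ r = r ∨ 0 < gain1 u P r (δ r)) ∧
          x = ∑ a : A1 × A2, P a * (fun a => -u a) (δ a.1, a.2)},
        (-∑ r : A1, (Finset.univ : Finset A1).sup' Finset.univ_nonempty (T r)) ≤ x := by
      rintro x ⟨δ, -, rfl⟩
      show _ ≤ ∑ a : A1 × A2, P a * -u (δ a.1, a.2)
      rw [hsum]
      have : (∑ r : A1, T r (δ r)) ≤
          ∑ r : A1, (Finset.univ : Finset A1).sup' Finset.univ_nonempty (T r) :=
        Finset.sum_le_sum fun r _ => Finset.le_sup' _ (Finset.mem_univ (δ r))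
      linarith
    refine le_antisymm (csInf_le ⟨_, hlb⟩ hmem) (le_csInf ⟨_, hmem⟩ hlb)
end

section
/- In a finite two-player zero-sum game with value v, every correlated distribution P satisfies π_1(P) ≤ v and π_2(P) ≤ −v. -/
open Finset

variable {A1 A2 : Type*} [Fintype A1] [Fintype A2] [DecidableEq A1] [DecidableEq A2]

/-- in a finite two-player zero-sum game with value `v`
(`v` is both guaranteed by some maximin strategy of player 1 and capped by some
minimax strategy of player 2), every correlated distribution `P` satisfies
`π_1(P) ≤ v` and `π_2(P) ≤ −v`. -/
theorem zeroSum_perf_le_value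
    [Nonempty A1] [Nonempty A2] (u : A1 × A2 → ℝ) (v : ℝ)
    (hv1 : ∃ p1 ∈ stdSimplex ℝ A1, ∀ a2 : A2, v ≤ ∑ a1 : A1, p1 a1 * u (a1, a2))
    (hv2 : ∃ p2 ∈ stdSimplex ℝ A2, ∀ a1 : A1, (∑ a2 : A2, p2 a2 * u (a1, a2)) ≤ v)
    (P : A1 × A2 → ℝ) (hP : P ∈ stdSimplex ℝ (A1 × A2)) :
    perf1 u (fun a => -u a) P ≤ v ∧ perf2 u (fun a => -u a) P ≤ -v := by
  classical
  obtain ⟨hPnn, hPsum⟩ := hP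
  obtain ⟨p1, ⟨hp1nn, hp1sum⟩, hp1v⟩ := hv1
  obtain ⟨p2, ⟨hp2nn, hp2sum⟩, hp2v⟩ := hv2
  constructor
  · -- perf1 ≤ v
    set g : A2 → A2 → ℝ := fun r b => ∑ a1, P (a1, r) * u (a1, b) with hg
    have hmin : ∀ r : A2, ∃ mr : A2, ∀ b, g r mr ≤ g r b := by
      intro r
      obtain ⟨mr, -, hmr⟩ := Finset.exists_min_image Finset.univ (g r) ⟨Classical.arbitrary A2, Finset.mem_univ _⟩
      exact ⟨mr, fun b => hmr b (Finset.mem_univ b)⟩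
    choose m hm using hmin
    set δ : A2 → A2 := fun r => if g r (m r) < g r r then m r else r with hδ
    have hgain : ∀ r b, gain2 (fun a => -u a) P r b = g r r - g r b := by
      intro r b
      simp only [gain2, g, ← Finset.sum_sub_distrib]
      apply Finset.sum_congr rfl
      intro a1 _
      ring
    have hδmem : ∀ r, δ r = r ∨ 0 < gain2 (fun a => -u a) P r (δ r) := by
      intro r
      by_cases h : g r (m r) < g r r
      · right
        rw [hgain]
        simp only [hδ, if_pos h]
        linarith
      · left; simp only [hδ, if_neg h]
    have hδbest : ∀ r b, g r (δ r) ≤ g r b := by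
      intro r b
      by_cases h : g r (m r) < g r r
      · simp only [hδ, if_pos h]; exact hm r b
      · simp only [hδ, if_neg h]
        exact le_trans (not_lt.mp h) (hm r b)
    have hx : (∑ a : A1 × A2, P a * u (a.1, δ a.2)) ∈
        {x | ∃ δ : A2 → A2, (∀ r : A2, δ r = r ∨ 0 < gain2 (fun a => -u a) P r (δ r)) ∧
          x = ∑ a : A1 × A2, P a * u (a.1, δ a.2)} := ⟨δ, hδmem, rfl⟩
    have hbdd : BddBelow {x | ∃ δ : A2 → A2,
        (∀ r : A2, δ r = r ∨ 0 < gain2 (fun a => -u a) P r (δ r)) ∧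
        x = ∑ a : A1 × A2, P a * u (a.1, δ a.2)} := by
      apply Set.Finite.bddBelow
      apply Set.Finite.subset (Set.finite_range
        (fun δ : A2 → A2 => ∑ a : A1 × A2, P a * u (a.1, δ a.2)))
      rintro x ⟨δ', -, rfl⟩
      exact ⟨δ', rfl⟩
    refine le_trans (csInf_le hbdd hx) ?_
    have key : (∑ a : A1 × A2, P a * u (a.1, δ a.2)) = ∑ r : A2, g r (δ r) := by
      rw [Fintype.sum_prod_type_right]
    rw [key]
    have step1 : ∀ r : A2, g r (δ r) ≤ ∑ a1 : A1, P (a1, r) * v := by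
      intro r
      have h1 : g r (δ r) ≤ ∑ b : A2, p2 b * g r b := by
        have : g r (δ r) = ∑ b : A2, p2 b * g r (δ r) := by
          rw [← Finset.sum_mul, hp2sum, one_mul]
        rw [this]
        apply Finset.sum_le_sum
        intro b _
        exact mul_le_mul_of_nonneg_left (hδbest r b) (hp2nn b)
      refine le_trans h1 ?_
      have h2 : (∑ b : A2, p2 b * g r b) = ∑ a1 : A1, P (a1, r) * ∑ b : A2, p2 b * u (a1, b) := by
        simp only [g, Finset.mul_sum]
        rw [Finset.sum_comm]
        apply Finset.sum_congr rfl; intro a1 _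
        apply Finset.sum_congr rfl; intro b _
        ring
      rw [h2]
      apply Finset.sum_le_sum
      intro a1 _
      exact mul_le_mul_of_nonneg_left (hp2v a1) (hPnn (a1, r))
    refine le_trans (Finset.sum_le_sum fun r _ => step1 r) ?_
    have : (∑ r : A2, ∑ a1 : A1, P (a1, r) * v) = (∑ a : A1 × A2, P a) * v := by
      rw [Fintype.sum_prod_type_right, Finset.sum_mul]
      apply Finset.sum_congr rfl; intro r _
      rw [Finset.sum_mul]
    rw [this, hPsum, one_mul]
  · -- perf2 ≤ -v
    set g : A1 → A1 → ℝ := fun r b => ∑ a2, P (r, a2) * u (b, a2) with hg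
    have hmax : ∀ r : A1, ∃ mr : A1, ∀ b, g r b ≤ g r mr := by
      intro r
      obtain ⟨mr, -, hmr⟩ := Finset.exists_max_image Finset.univ (g r) ⟨Classical.arbitrary A1, Finset.mem_univ _⟩
      exact ⟨mr, fun b => hmr b (Finset.mem_univ b)⟩
    choose m hm using hmax
    set δ : A1 → A1 := fun r => if g r r < g r (m r) then m r else r with hδ
    have hgain : ∀ r b, gain1 u P r b = g r b - g r r := by
      intro r b
      simp only [gain1, g, ← Finset.sum_sub_distrib]
      apply Finset.sum_congr rfl
      intro a2 _
      ring
    have hδmem : ∀ r, δ r = r ∨ 0 < gain1 u P r (δ r) := by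
      intro r
      by_cases h : g r r < g r (m r)
      · right
        rw [hgain]
        simp only [hδ, if_pos h]
        linarith
      · left; simp only [hδ, if_neg h]
    have hδbest : ∀ r b, g r b ≤ g r (δ r) := by
      intro r b
      by_cases h : g r r < g r (m r)
      · simp only [hδ, if_pos h]; exact hm r b
      · simp only [hδ, if_neg h]
        exact le_trans (hm r b) (not_lt.mp h)
    have hx : (∑ a : A1 × A2, P a * (fun a => -u a) (δ a.1, a.2)) ∈
        {x | ∃ δ : A1 → A1, (∀ r : A1, δ r = r ∨ 0 < gain1 u P r (δ r)) ∧
          x = ∑ a : A1 × A2, P a * (fun a => -u a) (δ a.1, a.2)} := ⟨δ, hδmem, rfl⟩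
    have hbdd : BddBelow {x | ∃ δ : A1 → A1,
        (∀ r : A1, δ r = r ∨ 0 < gain1 u P r (δ r)) ∧
        x = ∑ a : A1 × A2, P a * (fun a => -u a) (δ a.1, a.2)} := by
      apply Set.Finite.bddBelow
      apply Set.Finite.subset (Set.finite_range
        (fun δ' : A1 → A1 => ∑ a : A1 × A2, P a * (fun a => -u a) (δ' a.1, a.2)))
      rintro x ⟨δ', -, rfl⟩
      exact ⟨δ', rfl⟩
    refine le_trans (csInf_le hbdd hx) ?_
    have key : (∑ a : A1 × A2, P a * (fun a => -u a) (δ a.1, a.2)) = -∑ r : A1, g r (δ r) := by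
      rw [Fintype.sum_prod_type, ← Finset.sum_neg_distrib]
      apply Finset.sum_congr rfl; intro r _
      simp only [g, ← Finset.sum_neg_distrib]
      apply Finset.sum_congr rfl; intro a2 _
      ring
    rw [key, neg_le_neg_iff]
    have step1 : ∀ r : A1, (∑ a2 : A2, P (r, a2) * v) ≤ g r (δ r) := by
      intro r
      have h1 : (∑ b : A1, p1 b * g r b) ≤ g r (δ r) := by
        have : g r (δ r) = ∑ b : A1, p1 b * g r (δ r) := by
          rw [← Finset.sum_mul, hp1sum, one_mul]
        rw [this]
        apply Finset.sum_le_sum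
        intro b _
        exact mul_le_mul_of_nonneg_left (hδbest r b) (hp1nn b)
      refine le_trans ?_ h1
      have h2 : (∑ b : A1, p1 b * g r b) = ∑ a2 : A2, P (r, a2) * ∑ b : A1, p1 b * u (b, a2) := by
        simp only [g, Finset.mul_sum]
        rw [Finset.sum_comm]
        apply Finset.sum_congr rfl; intro a2 _
        apply Finset.sum_congr rfl; intro b _
        ring
      rw [h2]
      apply Finset.sum_le_sum
      intro a2 _
      exact mul_le_mul_of_nonneg_left (hp1v a2) (hPnn (r, a2))
    refine le_trans ?_ (Finset.sum_le_sum fun r _ => step1 r)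
    have : (∑ r : A1, ∑ a2 : A2, P (r, a2) * v) = (∑ a : A1 × A2, P a) * v := by
      rw [Fintype.sum_prod_type, Finset.sum_mul]
      apply Finset.sum_congr rfl; intro r _
      rw [Finset.sum_mul]
    rw [this, hPsum, one_mul]
end

section
/- In a finite two-player zero-sum game with value v, every correlated equilibrium P^CE has expected payoff vector (v, −v): Σ_{a∈A} P^CE(a) u(a) = v. -/
open Finset

variable {A1 A2 : Type*} [Fintype A1] [Fintype A2] [DecidableEq A1] [DecidableEq A2]

/-- in a finite two-player zero-sum game with value `v`, every
correlated equilibrium `P^CE` has expected payoff vector `(v, −v)`. -/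
theorem zeroSum_CE_payoff_eq_value
    [Nonempty A1] [Nonempty A2] (u : A1 × A2 → ℝ) (v : ℝ)
    (hv1 : ∃ p1 ∈ stdSimplex ℝ A1, ∀ a2 : A2, v ≤ ∑ a1 : A1, p1 a1 * u (a1, a2))
    (hv2 : ∃ p2 ∈ stdSimplex ℝ A2, ∀ a1 : A1, (∑ a2 : A2, p2 a2 * u (a1, a2)) ≤ v)
    (P : A1 × A2 → ℝ) (hP : P ∈ stdSimplex ℝ (A1 × A2))
    (hCE : IsCE2 u (fun a => -u a) P) :
    (∑ a : A1 × A2, P a * u a) = v ∧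
    (∑ a : A1 × A2, P a * (-u a)) = -v := by
  obtain ⟨hCE1, hCE2⟩ := hCE
  obtain ⟨hPnn, hPsum⟩ := hP
  obtain ⟨p1, ⟨hp1nn, hp1sum⟩, hp1⟩ := hv1
  obtain ⟨p2, ⟨hp2nn, hp2sum⟩, hp2⟩ := hv2
  set E := ∑ a : A1 × A2, P a * u a with hE
  have hEsum : E = ∑ r : A1, ∑ a2 : A2, P (r, a2) * u (r, a2) := by
    rw [hE, Fintype.sum_prod_type]
  have hqnn : ∀ a2 : A2, 0 ≤ ∑ a1 : A1, P (a1, a2) :=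
    fun a2 => Finset.sum_nonneg fun a1 _ => hPnn _
  have hmnn : ∀ a1 : A1, 0 ≤ ∑ a2 : A2, P (a1, a2) :=
    fun a1 => Finset.sum_nonneg fun a2 _ => hPnn _
  have hqsum : (∑ a2 : A2, ∑ a1 : A1, P (a1, a2)) = 1 := by
    rw [Finset.sum_comm, ← Fintype.sum_prod_type]; exact hPsum
  have hmsum : (∑ a1 : A1, ∑ a2 : A2, P (a1, a2)) = 1 := by
    rw [← Fintype.sum_prod_type]; exact hPsum
  have h1 : ∀ b : A1, (∑ a2 : A2, (∑ a1 : A1, P (a1, a2)) * u (b, a2)) ≤ E := by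
    intro b
    calc ∑ a2 : A2, (∑ a1 : A1, P (a1, a2)) * u (b, a2)
        = ∑ r : A1, ∑ a2 : A2, P (r, a2) * u (b, a2) := by
          rw [Finset.sum_comm]
          exact Finset.sum_congr rfl fun a2 _ => (Finset.sum_mul _ _ _)
      _ ≤ ∑ r : A1, ∑ a2 : A2, P (r, a2) * u (r, a2) := by
          refine Finset.sum_le_sum fun r _ => ?_
          have h := hCE1 r b
          have hsplit : (∑ a2 : A2, P (r, a2) * (u (r, a2) - u (b, a2)))
              = (∑ a2 : A2, P (r, a2) * u (r, a2))
                - ∑ a2 : A2, P (r, a2) * u (b, a2) := by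
            rw [← Finset.sum_sub_distrib]
            exact Finset.sum_congr rfl fun a2 _ => by ring
          linarith [hsplit ▸ h]
      _ = E := hEsum.symm
  have h2 : ∀ b : A2, E ≤ ∑ a1 : A1, (∑ a2 : A2, P (a1, a2)) * u (a1, b) := by
    intro b
    calc E = ∑ r : A2, ∑ a1 : A1, P (a1, r) * u (a1, r) := by
          rw [hEsum, Finset.sum_comm]
      _ ≤ ∑ r : A2, ∑ a1 : A1, P (a1, r) * u (a1, b) := by
          refine Finset.sum_le_sum fun r _ => ?_
          have h := hCE2 r b
          simp only [neg_sub_neg] at h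
          have hsplit : (∑ a1 : A1, P (a1, r) * (u (a1, b) - u (a1, r)))
              = (∑ a1 : A1, P (a1, r) * u (a1, b))
                - ∑ a1 : A1, P (a1, r) * u (a1, r) := by
            rw [← Finset.sum_sub_distrib]
            exact Finset.sum_congr rfl fun a1 _ => by ring
          linarith [hsplit ▸ h]
      _ = ∑ a1 : A1, (∑ a2 : A2, P (a1, a2)) * u (a1, b) := by
          rw [Finset.sum_comm]
          exact Finset.sum_congr rfl fun a1 _ => (Finset.sum_mul _ _ _).symm
  have hvle : v ≤ E := by
    calc v = ∑ a2 : A2, (∑ a1 : A1, P (a1, a2)) * v := by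
          rw [← Finset.sum_mul, hqsum, one_mul]
      _ ≤ ∑ a2 : A2, (∑ a1 : A1, P (a1, a2)) * (∑ b : A1, p1 b * u (b, a2)) :=
          Finset.sum_le_sum fun a2 _ =>
            mul_le_mul_of_nonneg_left (hp1 a2) (hqnn a2)
      _ = ∑ b : A1, p1 b * (∑ a2 : A2, (∑ a1 : A1, P (a1, a2)) * u (b, a2)) := by
          simp only [Finset.mul_sum]
          rw [Finset.sum_comm]
          exact Finset.sum_congr rfl fun b _ => Finset.sum_congr rfl fun a2 _ => by ring
      _ ≤ ∑ b : A1, p1 b * E :=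
          Finset.sum_le_sum fun b _ =>
            mul_le_mul_of_nonneg_left (h1 b) (hp1nn b)
      _ = E := by rw [← Finset.sum_mul, hp1sum, one_mul]
  have hvge : E ≤ v := by
    calc E = ∑ b : A2, p2 b * E := by rw [← Finset.sum_mul, hp2sum, one_mul]
      _ ≤ ∑ b : A2, p2 b * (∑ a1 : A1, (∑ a2 : A2, P (a1, a2)) * u (a1, b)) :=
          Finset.sum_le_sum fun b _ =>
            mul_le_mul_of_nonneg_left (h2 b) (hp2nn b)
      _ = ∑ a1 : A1, (∑ a2 : A2, P (a1, a2)) * (∑ b : A2, p2 b * u (a1, b)) := by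
          simp only [Finset.mul_sum]
          rw [Finset.sum_comm]
          exact Finset.sum_congr rfl fun a1 _ => Finset.sum_congr rfl fun b _ => by ring
      _ ≤ ∑ a1 : A1, (∑ a2 : A2, P (a1, a2)) * v :=
          Finset.sum_le_sum fun a1 _ =>
            mul_le_mul_of_nonneg_left (hp2 a1) (hmnn a1)
      _ = v := by rw [← Finset.sum_mul, hmsum, one_mul]
  have hEv : E = v := le_antisymm hvge hvle
  constructor
  · exact hEv
  · have : (∑ a : A1 × A2, P a * (-u a)) = -E := by
      rw [hE, ← Finset.sum_neg_distrib]
      exact Finset.sum_congr rfl fun a _ => by ring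
    rw [this, hEv]
end

section
/- In a finite two-player zero-sum game, the set of correlated optimins equals the set of correlated equilibria: a correlated distribution P is a correlated optimin if and only if it is a correlated equilibrium. -/
open Finset

variable {A1 A2 : Type*} [Fintype A1] [Fintype A2] [DecidableEq A1] [DecidableEq A2]

set_option linter.unusedSectionVars false
set_option linter.unusedVariables false

/-- von Neumann minimax theorem for finite zero-sum games. -/
lemma exists_minimax [Nonempty A1] [Nonempty A2] (u : A1 × A2 → ℝ) :
    ∃ (x : A1 → ℝ) (y : A2 → ℝ) (v : ℝ), x ∈ stdSimplex ℝ A1 ∧ y ∈ stdSimplex ℝ A2 ∧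
      (∀ j, v ≤ ∑ i, x i * u (i, j)) ∧ (∀ i, ∑ j, y j * u (i, j) ≤ v) := by
  classical
  set φ : (A2 → ℝ) → ℝ :=
    fun y => univ.sup' univ_nonempty (fun i : A1 => ∑ j, y j * u (i, j)) with hφdef
  have hφc : Continuous φ := by
    apply Continuous.finset_sup'_apply univ_nonempty
    intro i _
    exact continuous_finset_sum _ fun j _ => (continuous_apply j).mul continuous_const
  obtain ⟨y0, hy0, hy0min⟩ := (isCompact_stdSimplex ℝ A2).exists_isMinOn
    ⟨_, single_mem_stdSimplex ℝ (Classical.arbitrary A2)⟩ hφc.continuousOn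
  set v := φ y0 with hvdef
  have hy0le : ∀ i, ∑ j, y0 j * u (i, j) ≤ v := by
    intro i
    rw [hvdef, hφdef]
    exact Finset.le_sup' (fun i : A1 => ∑ j, y0 j * u (i, j)) (Finset.mem_univ i)
  -- key approximation step via separation
  have key : ∀ ε : ℝ, 0 < ε → ∃ x ∈ stdSimplex ℝ A1, ∀ j, v - ε < ∑ i, x i * u (i, j) := by
    intro ε hε
    set p : A2 ⊕ A1 → (A1 → ℝ) :=
      Sum.elim (fun j i => u (i, j) - (v - ε)) (fun i => Pi.single i 1) with hpdef
    by_cases h0 : (0 : A1 → ℝ) ∈ convexHull ℝ (Set.range p)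
    · exfalso
      rw [convexHull_range_eq_exists_affineCombination] at h0
      obtain ⟨s, w, hw0, hw1, hcomb⟩ := h0
      rw [s.affineCombination_eq_linear_combination p w hw1] at hcomb
      set W : A2 ⊕ A1 → ℝ := fun k => if k ∈ s then w k else 0 with hWdef
      have hWnn : ∀ k, 0 ≤ W k := by
        intro k; by_cases hk : k ∈ s <;> simp [hWdef, hk]
        exact hw0 k hk
      have hWsum : ∑ k, W k • p k = (0 : A1 → ℝ) := by
        have h1 : ∑ k ∈ s, W k • p k = ∑ k, W k • p k :=
          Finset.sum_subset (Finset.subset_univ s) (fun k _ hk => by simp [hWdef, hk])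
        have h2 : ∑ k ∈ s, W k • p k = ∑ k ∈ s, w k • p k :=
          Finset.sum_congr rfl fun k hk => by simp [hWdef, hk]
        rw [← h1, h2, hcomb]
      have hW1 : ∑ k, W k = 1 := by
        have h1 : ∑ k ∈ s, W k = ∑ k, W k :=
          Finset.sum_subset (Finset.subset_univ s) (fun k _ hk => by simp [hWdef, hk])
        have h2 : ∑ k ∈ s, W k = ∑ k ∈ s, w k :=
          Finset.sum_congr rfl fun k hk => by simp [hWdef, hk]
        rw [← h1, h2, hw1]
      set L : A2 → ℝ := fun j => W (Sum.inl j) with hLdef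
      set M : A1 → ℝ := fun i => W (Sum.inr i) with hMdef
      have hcoord : ∀ i, (∑ j, L j * (u (i, j) - (v - ε))) + M i = 0 := by
        intro i
        have h := congrFun hWsum i
        rw [Finset.sum_apply] at h
        simp only [Pi.smul_apply, smul_eq_mul] at h
        rw [Fintype.sum_sum_type] at h
        simpa [hpdef, hLdef, hMdef, Pi.single_apply, mul_ite] using h
      have hLnn : ∀ j, 0 ≤ L j := fun j => hWnn _
      have hMnn : ∀ i, 0 ≤ M i := fun i => hWnn _
      set s0 := ∑ j, L j with hs0def
      have hrow : ∀ i, ∑ j, L j * u (i, j) ≤ s0 * (v - ε) := by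
        intro i
        have h := hcoord i
        have h2 : ∑ j, L j * (u (i, j) - (v - ε)) ≤ 0 := by linarith [hMnn i]
        have hexp : ∑ j, L j * (u (i, j) - (v - ε))
            = ∑ j, L j * u (i, j) - s0 * (v - ε) := by
          rw [hs0def, Finset.sum_mul, ← Finset.sum_sub_distrib]
          exact Finset.sum_congr rfl fun j _ => by ring
        rw [hexp] at h2; linarith
      rcases eq_or_lt_of_le (Finset.sum_nonneg fun j _ => hLnn j) with hz | hpos
      · -- all L zero, then all M zero, contradicting total mass 1
        have hL0 : ∀ j, L j = 0 := fun j =>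
          (Finset.sum_eq_zero_iff_of_nonneg (fun j _ => hLnn j)).mp hz.symm j (Finset.mem_univ j)
        have hM0 : ∀ i, M i = 0 := by
          intro i
          have h := hcoord i
          simp only [hL0, zero_mul, Finset.sum_const_zero, zero_add] at h
          exact h
        rw [Fintype.sum_sum_type] at hW1
        simp only [← hLdef, ← hMdef, hL0, hM0, Finset.sum_const_zero, add_zero] at hW1
        norm_num at hW1
      · set y1 : A2 → ℝ := fun j => L j / s0 with hy1def
        have hy1 : y1 ∈ stdSimplex ℝ A2 := by
          constructor
          · intro j; exact div_nonneg (hLnn j) hpos.le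
          · rw [← Finset.sum_div]; exact div_self hpos.ne'
        have hmin : v ≤ φ y1 := hy0min hy1
        have hub : φ y1 ≤ v - ε := by
          apply Finset.sup'_le
          intro i _
          have h := hrow i
          have : ∑ j, y1 j * u (i, j) = (∑ j, L j * u (i, j)) / s0 := by
            rw [Finset.sum_div]
            exact Finset.sum_congr rfl fun j _ => by rw [hy1def]; ring
          rw [this]
          rw [div_le_iff₀ hpos]
          linarith
        linarith
    · have hK : IsClosed (convexHull ℝ (Set.range p)) :=
        ((Set.finite_range p).isCompact_convexHull (𝕜 := ℝ)).isClosed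
      obtain ⟨f, t, hft, ht0⟩ :=
        geometric_hahn_banach_closed_point (convex_convexHull ℝ _) hK h0
      have ht0' : t < 0 := by simpa using ht0
      have hrep : ∀ z : A1 → ℝ, f z = ∑ i, z i * f (Pi.single i 1) := by
        intro z
        have hz : z = ∑ i, z i • (Pi.single i (1:ℝ) : A1 → ℝ) := by
          funext i'
          rw [Finset.sum_apply]
          simp [Pi.single_apply]
        conv_lhs => rw [hz]
        rw [map_sum]
        exact Finset.sum_congr rfl fun i _ => by rw [map_smul]; simp
      have hmem : ∀ k, p k ∈ convexHull ℝ (Set.range p) :=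
        fun k => subset_convexHull ℝ _ ⟨k, rfl⟩
      set ξ : A1 → ℝ := fun i => -(f (Pi.single i 1)) with hξdef
      have hξpos : ∀ i, 0 < ξ i := by
        intro i
        have := hft _ (hmem (Sum.inr i))
        simp only [hpdef, Sum.elim_inr] at this
        simp only [hξdef]; linarith
      set S := ∑ i, ξ i with hSdef
      have hSpos : 0 < S := Finset.sum_pos (fun i _ => hξpos i) Finset.univ_nonempty
      refine ⟨fun i => ξ i / S, ⟨fun i => div_nonneg (hξpos i).le hSpos.le, ?_⟩, ?_⟩
      · rw [← Finset.sum_div]; exact div_self hSpos.ne'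
      · intro j
        have hcol := hft _ (hmem (Sum.inl j))
        have hval : f (p (Sum.inl j)) = ∑ i, (u (i, j) - (v - ε)) * f (Pi.single i 1) := by
          rw [hrep]; simp [hpdef]
        rw [hval] at hcol
        have hsum : ∑ i, (u (i, j) - (v - ε)) * f (Pi.single i 1)
            = -(∑ i, ξ i * u (i, j)) + S * (v - ε) := by
          rw [hSdef, Finset.sum_mul, ← Finset.sum_neg_distrib, ← Finset.sum_add_distrib]
          exact Finset.sum_congr rfl fun i _ => by simp [hξdef]; ring
        rw [hsum] at hcol
        have hgt : S * (v - ε) < ∑ i, ξ i * u (i, j) := by linarith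
        have : ∑ i, ξ i / S * u (i, j) = (∑ i, ξ i * u (i, j)) / S := by
          rw [Finset.sum_div]; exact Finset.sum_congr rfl fun i _ => by ring
        rw [this, lt_div_iff₀ hSpos]
        linarith
  -- now maximize the min over the simplex for player 1
  set ψ : (A1 → ℝ) → ℝ :=
    fun x => univ.inf' univ_nonempty (fun j : A2 => ∑ i, x i * u (i, j)) with hψdef
  have hψc : Continuous ψ := by
    apply Continuous.finset_inf'_apply univ_nonempty
    intro j _
    exact continuous_finset_sum _ fun i _ => (continuous_apply i).mul continuous_const
  obtain ⟨x0, hx0, hx0max⟩ := (isCompact_stdSimplex ℝ A1).exists_isMaxOn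
    ⟨_, single_mem_stdSimplex ℝ (Classical.arbitrary A1)⟩ hψc.continuousOn
  have hvx : v ≤ ψ x0 := by
    by_contra hlt
    push_neg at hlt
    obtain ⟨x, hx, hxj⟩ := key (v - ψ x0) (by linarith)
    have hgt : ψ x0 < ψ x := by
      rw [hψdef]
      rw [Finset.lt_inf'_iff]
      intro j _
      have := hxj j
      linarith
    exact absurd (hx0max hx) (not_le.mpr hgt)
  exact ⟨x0, y0, v, hx0, hy0,
    fun j => le_trans hvx (Finset.inf'_le _ (Finset.mem_univ j)), hy0le⟩


lemma perf1_le_sum (u1 u2 P : A1 × A2 → ℝ) (δ : A2 → A2)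
    (hδ : ∀ r, δ r = r ∨ 0 < gain2 u2 P r (δ r)) :
    perf1 u1 u2 P ≤ ∑ a : A1 × A2, P a * u1 (a.1, δ a.2) := by
  apply csInf_le
  · apply Set.Finite.bddBelow
    apply Set.Finite.subset
      (Set.finite_range (fun δ : A2 → A2 => ∑ a : A1 × A2, P a * u1 (a.1, δ a.2)))
    rintro x ⟨δ', _, rfl⟩; exact ⟨δ', rfl⟩
  · exact ⟨δ, hδ, rfl⟩

lemma le_perf1 (u1 u2 P : A1 × A2 → ℝ) (c : ℝ)
    (h : ∀ δ : A2 → A2, (∀ r, δ r = r ∨ 0 < gain2 u2 P r (δ r)) →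
      c ≤ ∑ a : A1 × A2, P a * u1 (a.1, δ a.2)) :
    c ≤ perf1 u1 u2 P :=
  le_csInf ⟨_, fun r => r, fun _ => Or.inl rfl, rfl⟩
    (by rintro x ⟨δ, hδ, rfl⟩; exact h δ hδ)

lemma perf2_le_sum (u1 u2 P : A1 × A2 → ℝ) (δ : A1 → A1)
    (hδ : ∀ r, δ r = r ∨ 0 < gain1 u1 P r (δ r)) :
    perf2 u1 u2 P ≤ ∑ a : A1 × A2, P a * u2 (δ a.1, a.2) := by
  apply csInf_le
  · apply Set.Finite.bddBelow
    apply Set.Finite.subset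
      (Set.finite_range (fun δ : A1 → A1 => ∑ a : A1 × A2, P a * u2 (δ a.1, a.2)))
    rintro x ⟨δ', _, rfl⟩; exact ⟨δ', rfl⟩
  · exact ⟨δ, hδ, rfl⟩

lemma le_perf2 (u1 u2 P : A1 × A2 → ℝ) (c : ℝ)
    (h : ∀ δ : A1 → A1, (∀ r, δ r = r ∨ 0 < gain1 u1 P r (δ r)) →
      c ≤ ∑ a : A1 × A2, P a * u2 (δ a.1, a.2)) :
    c ≤ perf2 u1 u2 P :=
  le_csInf ⟨_, fun r => r, fun _ => Or.inl rfl, rfl⟩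
    (by rintro x ⟨δ, hδ, rfl⟩; exact h δ hδ)

/-- For a CE, `perf1` equals the expected payoff. -/
lemma perf1_eq_of_CE (u : A1 × A2 → ℝ) (P : A1 × A2 → ℝ)
    (hCE : IsCE2 u (fun a => -u a) P) :
    perf1 u (fun a => -u a) P = ∑ a : A1 × A2, P a * u a := by
  have hg2 : ∀ r b : A2, gain2 (fun a => -u a) P r b ≤ 0 := by
    intro r b
    have h := hCE.2 r b
    have : gain2 (fun a => -u a) P r b
        = -∑ a1 : A1, P (a1, r) * ((fun a => -u a) (a1, r) - (fun a => -u a) (a1, b)) := by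
      rw [gain2, ← Finset.sum_neg_distrib]
      exact Finset.sum_congr rfl fun a1 _ => by ring
    rw [this]; linarith
  apply le_antisymm
  · have := perf1_le_sum u (fun a => -u a) P (fun r => r) (fun _ => Or.inl rfl)
    simpa using this
  · apply le_perf1
    intro δ hδ
    have hδid : ∀ r, δ r = r := by
      intro r
      rcases hδ r with h | h
      · exact h
      · exact absurd h (not_lt.mpr (hg2 r (δ r)))
    apply le_of_eq
    exact Finset.sum_congr rfl fun a _ => by rw [hδid a.2]
lemma perf2_eq_of_CE (u : A1 × A2 → ℝ) (P : A1 × A2 → ℝ)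
    (hCE : IsCE2 u (fun a => -u a) P) :
    perf2 u (fun a => -u a) P = -∑ a : A1 × A2, P a * u a := by
  have hg1 : ∀ r b : A1, gain1 u P r b ≤ 0 := by
    intro r b
    have h := hCE.1 r b
    have : gain1 u P r b = -∑ a2 : A2, P (r, a2) * (u (r, a2) - u (b, a2)) := by
      rw [gain1, ← Finset.sum_neg_distrib]
      exact Finset.sum_congr rfl fun a2 _ => by ring
    rw [this]; linarith
  apply le_antisymm
  · have := perf2_le_sum u (fun a => -u a) P (fun r => r) (fun _ => Or.inl rfl)
    calc perf2 u (fun a => -u a) P ≤ ∑ a : A1 × A2, P a * -u a := by simpa using this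
      _ = -∑ a : A1 × A2, P a * u a := by
          rw [← Finset.sum_neg_distrib]; exact Finset.sum_congr rfl fun a _ => by ring
  · apply le_perf2
    intro δ hδ
    have hδid : ∀ r, δ r = r := by
      intro r
      rcases hδ r with h | h
      · exact h
      · exact absurd h (not_lt.mpr (hg1 r (δ r)))
    apply le_of_eq
    rw [← Finset.sum_neg_distrib]
    exact Finset.sum_congr rfl fun a _ => by rw [hδid a.1]; ring

/-- If `P` is not a CE, the sum of performances is strictly negative. -/
lemma sum_perf_neg (u : A1 × A2 → ℝ) (P : A1 × A2 → ℝ)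
    (hnCE : ¬ IsCE2 u (fun a => -u a) P) :
    perf1 u (fun a => -u a) P + perf2 u (fun a => -u a) P < 0 := by
  have hid1 : perf1 u (fun a => -u a) P ≤ ∑ a : A1 × A2, P a * u a := by
    simpa using perf1_le_sum u (fun a => -u a) P (fun r => r) (fun _ => Or.inl rfl)
  have hid2 : perf2 u (fun a => -u a) P ≤ -∑ a : A1 × A2, P a * u a := by
    have := perf2_le_sum u (fun a => -u a) P (fun r => r) (fun _ => Or.inl rfl)
    calc perf2 u (fun a => -u a) P ≤ ∑ a : A1 × A2, P a * -u a := by simpa using this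
      _ = -∑ a : A1 × A2, P a * u a := by
          rw [← Finset.sum_neg_distrib]; exact Finset.sum_congr rfl fun a _ => by ring
  rw [IsCE2, not_and_or] at hnCE
  rcases hnCE with h | h
  · -- player 1 has a profitable deviation: improve perf2 bound
    push_neg at h
    obtain ⟨r, b, hrb⟩ := h
    set g : ℝ := ∑ a2 : A2, P (r, a2) * (u (r, a2) - u (b, a2)) with hgdef
    have hg : g < 0 := hrb
    set δ : A1 → A1 := fun s => if s = r then b else s with hδdef
    have hadm : ∀ s, δ s = s ∨ 0 < gain1 u P s (δ s) := by
      intro s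
      by_cases hs : s = r
      · right
        subst hs
        have hδr : δ s = b := by simp [hδdef]
        rw [hδr]
        have : gain1 u P s b = -g := by
          rw [gain1, hgdef, ← Finset.sum_neg_distrib]
          exact Finset.sum_congr rfl fun a2 _ => by ring
        rw [this]; linarith
      · left; simp [hδdef, hs]
    have hle := perf2_le_sum u (fun a => -u a) P δ hadm
    have hsplit : ∑ a : A1 × A2, P a * (fun a => -u a) (δ a.1, a.2)
        = (-∑ a : A1 × A2, P a * u a) + g := by
      have h1 : ∑ a : A1 × A2, (P a * -u (δ a.1, a.2) - P a * -u a) = g := by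
        rw [Fintype.sum_prod_type]
        rw [Finset.sum_eq_single r]
        · have hδr : δ r = b := by simp [hδdef]
          rw [hgdef]
          refine Finset.sum_congr rfl fun a2 _ => ?_
          show P (r, a2) * -u (δ r, a2) - P (r, a2) * -u (r, a2) = _
          rw [hδr]; ring
        · intro s _ hs
          have : δ s = s := by simp [hδdef, hs]
          simp [this]
        · intro h; exact absurd (Finset.mem_univ r) h
      rw [Finset.sum_sub_distrib] at h1
      have h2 : ∑ a : A1 × A2, P a * -u a = -∑ a : A1 × A2, P a * u a := by
        rw [← Finset.sum_neg_distrib]; exact Finset.sum_congr rfl fun a _ => by ring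
      simp only [] at hle ⊢
      rw [h2] at h1
      linarith
    rw [hsplit] at hle
    linarith
  · -- player 2 has a profitable deviation: improve perf1 bound
    push_neg at h
    obtain ⟨r, b, hrb⟩ := h
    have hg : (∑ a1 : A1, P (a1, r) * (u (a1, b) - u (a1, r))) < 0 := by
      have : ∑ a1 : A1, P (a1, r) * ((fun a => -u a) (a1, r) - (fun a => -u a) (a1, b))
          = ∑ a1 : A1, P (a1, r) * (u (a1, b) - u (a1, r)) :=
        Finset.sum_congr rfl fun a1 _ => by
          show P (a1, r) * (-u (a1, r) - -u (a1, b)) = _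
          ring
      rw [this] at hrb; exact hrb
    set g : ℝ := ∑ a1 : A1, P (a1, r) * (u (a1, b) - u (a1, r)) with hgdef
    set δ : A2 → A2 := fun s => if s = r then b else s with hδdef
    have hadm : ∀ s, δ s = s ∨ 0 < gain2 (fun a => -u a) P s (δ s) := by
      intro s
      by_cases hs : s = r
      · right
        subst hs
        have hδr : δ s = b := by simp [hδdef]
        rw [hδr]
        have : gain2 (fun a => -u a) P s b = -g := by
          rw [gain2, hgdef, ← Finset.sum_neg_distrib]
          refine Finset.sum_congr rfl fun a1 _ => ?_
          show P (a1, s) * (-u (a1, b) - -u (a1, s)) = -(P (a1, s) * (u (a1, b) - u (a1, s)))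
          ring
        rw [this]; linarith
      · left; simp [hδdef, hs]
    have hle := perf1_le_sum u (fun a => -u a) P δ hadm
    have hsplit : ∑ a : A1 × A2, P a * u (a.1, δ a.2)
        = (∑ a : A1 × A2, P a * u a) + g := by
      have h1 : ∑ a : A1 × A2, (P a * u (a.1, δ a.2) - P a * u a) = g := by
        rw [Fintype.sum_prod_type_right]
        rw [Finset.sum_eq_single r]
        · have hδr : δ r = b := by simp [hδdef]
          rw [hgdef]
          refine Finset.sum_congr rfl fun a1 _ => ?_
          show P (a1, r) * u (a1, δ r) - P (a1, r) * u (a1, r) = _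
          rw [hδr]; ring
        · intro s _ hs
          have : δ s = s := by simp [hδdef, hs]
          simp [this]
        · intro h; exact absurd (Finset.mem_univ r) h
      rw [Finset.sum_sub_distrib] at h1
      linarith
    rw [hsplit] at hle
    linarith

/-- Player 1's performance is at most the value guaranteed by a strategy `y` of player 2. -/
lemma perf1_le_val [Nonempty A2] (u : A1 × A2 → ℝ) (P : A1 × A2 → ℝ) (hP : P ∈ stdSimplex ℝ (A1 × A2))
    (y : A2 → ℝ) (hy : y ∈ stdSimplex ℝ A2) (v : ℝ)
    (hyv : ∀ i, ∑ j, y j * u (i, j) ≤ v) :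
    perf1 u (fun a => -u a) P ≤ v := by
  classical
  have hmin : ∀ r : A2, ∃ b : A2, ∀ b' : A2,
      (∑ a1, P (a1, r) * u (a1, b)) ≤ ∑ a1, P (a1, r) * u (a1, b') := by
    intro r
    obtain ⟨b, _, hb⟩ := Finset.exists_min_image univ
      (fun b => ∑ a1, P (a1, r) * u (a1, b)) univ_nonempty
    exact ⟨b, fun b' => hb b' (Finset.mem_univ _)⟩
  choose β hβ using hmin
  set δ : A2 → A2 := fun r =>
    if (∑ a1, P (a1, r) * u (a1, β r)) < ∑ a1, P (a1, r) * u (a1, r) then β r else r with hδdef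
  have hadm : ∀ r, δ r = r ∨ 0 < gain2 (fun a => -u a) P r (δ r) := by
    intro r
    by_cases h : (∑ a1, P (a1, r) * u (a1, β r)) < ∑ a1, P (a1, r) * u (a1, r)
    · right
      have hδr : δ r = β r := by rw [hδdef]; simp [h]
      rw [hδr]
      have : gain2 (fun a => -u a) P r (β r)
          = (∑ a1, P (a1, r) * u (a1, r)) - ∑ a1, P (a1, r) * u (a1, β r) := by
        rw [gain2, ← Finset.sum_sub_distrib]
        refine Finset.sum_congr rfl fun a1 _ => ?_
        show P (a1, r) * (-u (a1, β r) - -u (a1, r)) = _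
        ring
      rw [this]; linarith
    · left; rw [hδdef]; simp [h]
  have hkey : ∀ r b', (∑ a1, P (a1, r) * u (a1, δ r)) ≤ ∑ a1, P (a1, r) * u (a1, b') := by
    intro r b'
    by_cases h : (∑ a1, P (a1, r) * u (a1, β r)) < ∑ a1, P (a1, r) * u (a1, r)
    · have hδr : δ r = β r := by rw [hδdef]; simp [h]
      rw [hδr]; exact hβ r b'
    · have hδr : δ r = r := by rw [hδdef]; simp [h]
      rw [hδr]; exact (not_lt.mp h).trans (hβ r b')
  have hle := perf1_le_sum u (fun a => -u a) P δ hadm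
  have hbound : ∑ a : A1 × A2, P a * u (a.1, δ a.2) ≤ v := by
    rw [Fintype.sum_prod_type_right]
    have step : ∀ r : A2, (∑ a1, P (a1, r) * u (a1, δ r)) ≤ ∑ a1, P (a1, r) * v := by
      intro r
      have h1 : (∑ a1, P (a1, r) * u (a1, δ r))
          = ∑ b, y b * ∑ a1, P (a1, r) * u (a1, δ r) := by
        rw [← Finset.sum_mul, hy.2, one_mul]
      have h2 : (∑ b, y b * ∑ a1, P (a1, r) * u (a1, δ r))
          ≤ ∑ b, y b * ∑ a1, P (a1, r) * u (a1, b) :=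
        Finset.sum_le_sum fun b _ => mul_le_mul_of_nonneg_left (hkey r b) (hy.1 b)
      have h3 : (∑ b, y b * ∑ a1, P (a1, r) * u (a1, b))
          = ∑ a1, P (a1, r) * ∑ b, y b * u (a1, b) := by
        simp only [Finset.mul_sum]
        rw [Finset.sum_comm]
        exact Finset.sum_congr rfl fun a1 _ => Finset.sum_congr rfl fun b _ => by ring
      have h4 : (∑ a1, P (a1, r) * ∑ b, y b * u (a1, b)) ≤ ∑ a1, P (a1, r) * v :=
        Finset.sum_le_sum fun a1 _ => mul_le_mul_of_nonneg_left (hyv a1) (hP.1 (a1, r))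
      rw [h1, ← h3] at *
      linarith
    calc ∑ r, ∑ a1, P (a1, r) * u (a1, δ r) ≤ ∑ r : A2, ∑ a1, P (a1, r) * v :=
          Finset.sum_le_sum fun r _ => step r
      _ = (∑ a : A1 × A2, P a) * v := by
          rw [Finset.sum_mul, Fintype.sum_prod_type_right]
      _ = v := by rw [hP.2, one_mul]
  linarith

/-- Player 2's performance is at most `-v` when player 1 has a strategy guaranteeing `v`. -/
lemma perf2_le_val [Nonempty A1] (u : A1 × A2 → ℝ) (P : A1 × A2 → ℝ) (hP : P ∈ stdSimplex ℝ (A1 × A2))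
    (x : A1 → ℝ) (hx : x ∈ stdSimplex ℝ A1) (v : ℝ)
    (hxv : ∀ j, v ≤ ∑ i, x i * u (i, j)) :
    perf2 u (fun a => -u a) P ≤ -v := by
  classical
  have hmax : ∀ r : A1, ∃ b : A1, ∀ b' : A1,
      (∑ a2, P (r, a2) * u (b', a2)) ≤ ∑ a2, P (r, a2) * u (b, a2) := by
    intro r
    obtain ⟨b, _, hb⟩ := Finset.exists_max_image univ
      (fun b => ∑ a2, P (r, a2) * u (b, a2)) univ_nonempty
    exact ⟨b, fun b' => hb b' (Finset.mem_univ _)⟩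
  choose β hβ using hmax
  set δ : A1 → A1 := fun r =>
    if (∑ a2, P (r, a2) * u (r, a2)) < ∑ a2, P (r, a2) * u (β r, a2) then β r else r with hδdef
  have hadm : ∀ r, δ r = r ∨ 0 < gain1 u P r (δ r) := by
    intro r
    by_cases h : (∑ a2, P (r, a2) * u (r, a2)) < ∑ a2, P (r, a2) * u (β r, a2)
    · right
      have hδr : δ r = β r := by rw [hδdef]; simp [h]
      rw [hδr]
      have : gain1 u P r (β r)
          = (∑ a2, P (r, a2) * u (β r, a2)) - ∑ a2, P (r, a2) * u (r, a2) := by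
        rw [gain1, ← Finset.sum_sub_distrib]
        exact Finset.sum_congr rfl fun a2 _ => by ring
      rw [this]; linarith
    · left; rw [hδdef]; simp [h]
  have hkey : ∀ r b', (∑ a2, P (r, a2) * u (b', a2)) ≤ ∑ a2, P (r, a2) * u (δ r, a2) := by
    intro r b'
    by_cases h : (∑ a2, P (r, a2) * u (r, a2)) < ∑ a2, P (r, a2) * u (β r, a2)
    · have hδr : δ r = β r := by rw [hδdef]; simp [h]
      rw [hδr]; exact hβ r b'
    · have hδr : δ r = r := by rw [hδdef]; simp [h]
      rw [hδr]; exact (hβ r b').trans (not_lt.mp h)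
  have hle := perf2_le_sum u (fun a => -u a) P δ hadm
  have hbound : ∑ a : A1 × A2, P a * (fun a => -u a) (δ a.1, a.2) ≤ -v := by
    have hform : ∑ a : A1 × A2, P a * (fun a => -u a) (δ a.1, a.2)
        = ∑ r : A1, ∑ a2, P (r, a2) * -u (δ r, a2) := by
      rw [Fintype.sum_prod_type]
    rw [hform]
    have step : ∀ r : A1, (∑ a2, P (r, a2) * -u (δ r, a2)) ≤ ∑ a2, P (r, a2) * (-v) := by
      intro r
      have h1 : (∑ a2, P (r, a2) * -u (δ r, a2))
          = ∑ i, x i * ∑ a2, P (r, a2) * -u (δ r, a2) := by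
        rw [← Finset.sum_mul, hx.2, one_mul]
      have h2 : (∑ i, x i * ∑ a2, P (r, a2) * -u (δ r, a2))
          ≤ ∑ i, x i * ∑ a2, P (r, a2) * -u (i, a2) := by
        refine Finset.sum_le_sum fun i _ => mul_le_mul_of_nonneg_left ?_ (hx.1 i)
        have := hkey r i
        have e1 : ∑ a2, P (r, a2) * -u (δ r, a2) = -∑ a2, P (r, a2) * u (δ r, a2) := by
          rw [← Finset.sum_neg_distrib]; exact Finset.sum_congr rfl fun a2 _ => by ring
        have e2 : ∑ a2, P (r, a2) * -u (i, a2) = -∑ a2, P (r, a2) * u (i, a2) := by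
          rw [← Finset.sum_neg_distrib]; exact Finset.sum_congr rfl fun a2 _ => by ring
        rw [e1, e2]; linarith
      have h3 : (∑ i, x i * ∑ a2, P (r, a2) * -u (i, a2))
          = ∑ a2, P (r, a2) * -(∑ i, x i * u (i, a2)) := by
        simp only [Finset.mul_sum]
        rw [Finset.sum_comm]
        refine Finset.sum_congr rfl fun a2 _ => ?_
        have hmul : P (r, a2) * -(∑ i, x i * u (i, a2))
            = -(∑ i, P (r, a2) * (x i * u (i, a2))) := by
          rw [mul_neg, Finset.mul_sum]
        rw [hmul, ← Finset.sum_neg_distrib]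
        exact Finset.sum_congr rfl fun i _ => by ring
      have h4 : (∑ a2, P (r, a2) * -(∑ i, x i * u (i, a2))) ≤ ∑ a2, P (r, a2) * (-v) := by
        refine Finset.sum_le_sum fun a2 _ => mul_le_mul_of_nonneg_left ?_ (hP.1 (r, a2))
        have := hxv a2; linarith
      rw [h1, ← h3] at *
      linarith
    calc ∑ r : A1, ∑ a2, P (r, a2) * -u (δ r, a2) ≤ ∑ r : A1, ∑ a2, P (r, a2) * (-v) :=
          Finset.sum_le_sum fun r _ => step r
      _ = (∑ a : A1 × A2, P a) * (-v) := by
          rw [Finset.sum_mul, Fintype.sum_prod_type]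
      _ = -v := by rw [hP.2, one_mul]
  linarith

lemma prod_mem_stdSimplex (x : A1 → ℝ) (hx : x ∈ stdSimplex ℝ A1)
    (y : A2 → ℝ) (hy : y ∈ stdSimplex ℝ A2) :
    (fun a : A1 × A2 => x a.1 * y a.2) ∈ stdSimplex ℝ (A1 × A2) := by
  constructor
  · intro a; exact mul_nonneg (hx.1 a.1) (hy.1 a.2)
  · rw [Fintype.sum_prod_type]
    have : ∀ i, ∑ j, x i * y j = x i := by
      intro i; rw [← Finset.mul_sum, hy.2, mul_one]
    simp only [this]
    exact hx.2

lemma val_le_perf1 (u : A1 × A2 → ℝ) (x : A1 → ℝ) (hx : x ∈ stdSimplex ℝ A1)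
    (y : A2 → ℝ) (hy : y ∈ stdSimplex ℝ A2) (v : ℝ)
    (hxv : ∀ j, v ≤ ∑ i, x i * u (i, j)) :
    v ≤ perf1 u (fun a => -u a) (fun a : A1 × A2 => x a.1 * y a.2) := by
  apply le_perf1
  intro δ _
  have hform : ∑ a : A1 × A2, x a.1 * y a.2 * u (a.1, δ a.2)
      = ∑ j : A2, y j * ∑ i, x i * u (i, δ j) := by
    rw [Fintype.sum_prod_type_right]
    refine Finset.sum_congr rfl fun j _ => ?_
    rw [Finset.mul_sum]
    exact Finset.sum_congr rfl fun i _ => by ring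
  rw [hform]
  calc v = (∑ j, y j) * v := by rw [hy.2, one_mul]
    _ = ∑ j, y j * v := by rw [Finset.sum_mul]
    _ ≤ ∑ j : A2, y j * ∑ i, x i * u (i, δ j) :=
        Finset.sum_le_sum fun j _ => mul_le_mul_of_nonneg_left (hxv (δ j)) (hy.1 j)

lemma val_le_perf2 (u : A1 × A2 → ℝ) (x : A1 → ℝ) (hx : x ∈ stdSimplex ℝ A1)
    (y : A2 → ℝ) (hy : y ∈ stdSimplex ℝ A2) (v : ℝ)
    (hyv : ∀ i, ∑ j, y j * u (i, j) ≤ v) :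
    -v ≤ perf2 u (fun a => -u a) (fun a : A1 × A2 => x a.1 * y a.2) := by
  apply le_perf2
  intro δ _
  have hform : ∑ a : A1 × A2, x a.1 * y a.2 * (fun a => -u a) (δ a.1, a.2)
      = ∑ i : A1, x i * -(∑ j, y j * u (δ i, j)) := by
    rw [Fintype.sum_prod_type]
    refine Finset.sum_congr rfl fun i _ => ?_
    rw [mul_neg, Finset.mul_sum, ← Finset.sum_neg_distrib]
    exact Finset.sum_congr rfl fun j _ => by show x i * y j * -u (δ i, j) = _; ring
  rw [hform]
  calc -v = (∑ i, x i) * (-v) := by rw [hx.2, one_mul]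
    _ = ∑ i, x i * (-v) := by rw [Finset.sum_mul]
    _ ≤ ∑ i : A1, x i * -(∑ j, y j * u (δ i, j)) :=
        Finset.sum_le_sum fun i _ =>
          mul_le_mul_of_nonneg_left (neg_le_neg (hyv (δ i))) (hx.1 i)


/-- in a finite two-player zero-sum game, a correlated distribution
is a correlated optimin (Pareto undominated with respect to `(π_1, π_2)`) if and
only if it is a correlated equilibrium. -/
theorem zeroSum_optimin_iff_CE
    [Nonempty A1] [Nonempty A2] (u : A1 × A2 → ℝ)
    (P : A1 × A2 → ℝ) (hP : P ∈ stdSimplex ℝ (A1 × A2)) :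
    (¬ ∃ Q ∈ stdSimplex ℝ (A1 × A2),
        (perf1 u (fun a => -u a) P ≤ perf1 u (fun a => -u a) Q ∧
         perf2 u (fun a => -u a) P ≤ perf2 u (fun a => -u a) Q) ∧
        (perf1 u (fun a => -u a) P < perf1 u (fun a => -u a) Q ∨
         perf2 u (fun a => -u a) P < perf2 u (fun a => -u a) Q)) ↔
    IsCE2 u (fun a => -u a) P := by
  constructor
  · -- optimin ⇒ CE, contrapositively
    intro h
    by_contra hnCE
    obtain ⟨x, y, v, hx, hy, hxv, hyv⟩ := exists_minimax u
    set Q : A1 × A2 → ℝ := fun a => x a.1 * y a.2 with hQdef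
    have hQ : Q ∈ stdSimplex ℝ (A1 × A2) := prod_mem_stdSimplex x hx y hy
    have h1P : perf1 u (fun a => -u a) P ≤ v := perf1_le_val u P hP y hy v hyv
    have h2P : perf2 u (fun a => -u a) P ≤ -v := perf2_le_val u P hP x hx v hxv
    have h1Q : v ≤ perf1 u (fun a => -u a) Q := val_le_perf1 u x hx y hy v hxv
    have h2Q : -v ≤ perf2 u (fun a => -u a) Q := val_le_perf2 u x hx y hy v hyv
    have hsum : perf1 u (fun a => -u a) P + perf2 u (fun a => -u a) P < 0 :=
      sum_perf_neg u P hnCE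
    refine h ⟨Q, hQ, ⟨h1P.trans h1Q, h2P.trans h2Q⟩, ?_⟩
    by_contra hc
    push_neg at hc
    linarith [hc.1, hc.2]
  · -- CE ⇒ optimin
    intro hCE
    rintro ⟨Q, hQ, ⟨h1, h2⟩, hstrict⟩
    have e1 : perf1 u (fun a => -u a) P = ∑ a : A1 × A2, P a * u a := perf1_eq_of_CE u P hCE
    have e2 : perf2 u (fun a => -u a) P = -∑ a : A1 × A2, P a * u a := perf2_eq_of_CE u P hCE
    have q1 : perf1 u (fun a => -u a) Q ≤ ∑ a : A1 × A2, Q a * u a := by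
      simpa using perf1_le_sum u (fun a => -u a) Q (fun r => r) (fun _ => Or.inl rfl)
    have q2 : perf2 u (fun a => -u a) Q ≤ -∑ a : A1 × A2, Q a * u a := by
      have := perf2_le_sum u (fun a => -u a) Q (fun r => r) (fun _ => Or.inl rfl)
      calc perf2 u (fun a => -u a) Q ≤ ∑ a : A1 × A2, Q a * -u a := by simpa using this
        _ = -∑ a : A1 × A2, Q a * u a := by
            rw [← Finset.sum_neg_distrib]; exact Finset.sum_congr rfl fun a _ => by ring
    rcases hstrict with h | h <;> linarith
end

section
/- In a finite two-player zero-sum game, if a correlated distribution P satisfies Σ_{a_2} min_{b_2} Σ_{a_1} P(a_1,a_2) u(a_1,b_2) = Σ_{a∈A} P(a) u(a) = Σ_{a_1} max_{b_1} Σ_{a_2} P(a_1,a_2) u(b_1,a_2), then P is a correlated equilibrium; that is, equality of these outer sums forces equality at every recommendation, so obedience attains the recommendation-level minimum for player 2 and the recommendation-level maximum for player 1. -/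
open Finset

variable {A1 A2 : Type*} [Fintype A1] [Fintype A2] [DecidableEq A1] [DecidableEq A2]

/-- in a finite two-player zero-sum game, if
`Σ_{a_2} min_{b_2} Σ_{a_1} P(a_1,a_2) u(a_1,b_2) = Σ_a P(a) u(a)
 = Σ_{a_1} max_{b_1} Σ_{a_2} P(a_1,a_2) u(b_1,a_2)`,
then `P` is a correlated equilibrium; equality of the outer sums forces equality
at every recommendation, so obedience attains the recommendation-level minimum
for player 2 and the recommendation-level maximum for player 1. -/
theorem zeroSum_equal_sums_implies_CE
    [Nonempty A1] [Nonempty A2] (u : A1 × A2 → ℝ)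
    (P : A1 × A2 → ℝ) (hP : P ∈ stdSimplex ℝ (A1 × A2))
    (h1 : (∑ a2 : A2, (Finset.univ : Finset A2).inf' Finset.univ_nonempty
            (fun b2 => ∑ a1 : A1, P (a1, a2) * u (a1, b2)))
          = ∑ a : A1 × A2, P a * u a)
    (h2 : (∑ a : A1 × A2, P a * u a)
          = ∑ a1 : A1, (Finset.univ : Finset A1).sup' Finset.univ_nonempty
            (fun b1 => ∑ a2 : A2, P (a1, a2) * u (b1, a2))) :
    IsCE2 u (fun a => -u a) P ∧
    (∀ a2 : A2, (Finset.univ : Finset A2).inf' Finset.univ_nonempty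
        (fun b2 => ∑ a1 : A1, P (a1, a2) * u (a1, b2))
      = ∑ a1 : A1, P (a1, a2) * u (a1, a2)) ∧
    (∀ a1 : A1, (Finset.univ : Finset A1).sup' Finset.univ_nonempty
        (fun b1 => ∑ a2 : A2, P (a1, a2) * u (b1, a2))
      = ∑ a2 : A2, P (a1, a2) * u (a1, a2)) := by
  classical
  -- total sum decompositions
  have hdec2 : (∑ a : A1 × A2, P a * u a)
      = ∑ a2 : A2, ∑ a1 : A1, P (a1, a2) * u (a1, a2) := by
    rw [Fintype.sum_prod_type_right]
  have hdec1 : (∑ a : A1 × A2, P a * u a)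
      = ∑ a1 : A1, ∑ a2 : A2, P (a1, a2) * u (a1, a2) := by
    rw [Fintype.sum_prod_type]
  -- pointwise inequalities
  have hinf_le : ∀ a2 : A2, (Finset.univ : Finset A2).inf' Finset.univ_nonempty
      (fun b2 => ∑ a1 : A1, P (a1, a2) * u (a1, b2))
      ≤ ∑ a1 : A1, P (a1, a2) * u (a1, a2) := fun a2 =>
    Finset.inf'_le _ (Finset.mem_univ a2)
  have hle_sup : ∀ a1 : A1, (∑ a2 : A2, P (a1, a2) * u (a1, a2))
      ≤ (Finset.univ : Finset A1).sup' Finset.univ_nonempty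
        (fun b1 => ∑ a2 : A2, P (a1, a2) * u (b1, a2)) := fun a1 =>
    Finset.le_sup' (f := fun b1 => ∑ a2 : A2, P (a1, a2) * u (b1, a2)) (Finset.mem_univ a1)
  -- equality at every recommendation
  have hinf : ∀ a2 : A2, (Finset.univ : Finset A2).inf' Finset.univ_nonempty
      (fun b2 => ∑ a1 : A1, P (a1, a2) * u (a1, b2))
      = ∑ a1 : A1, P (a1, a2) * u (a1, a2) := by
    have hsum : (∑ a2 : A2, (Finset.univ : Finset A2).inf' Finset.univ_nonempty
        (fun b2 => ∑ a1 : A1, P (a1, a2) * u (a1, b2)))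
        = ∑ a2 : A2, ∑ a1 : A1, P (a1, a2) * u (a1, a2) := by
      rw [h1, hdec2]
    intro a2
    exact (Finset.sum_eq_sum_iff_of_le (fun i _ => hinf_le i)).mp hsum a2 (Finset.mem_univ a2)
  have hsup : ∀ a1 : A1, (Finset.univ : Finset A1).sup' Finset.univ_nonempty
      (fun b1 => ∑ a2 : A2, P (a1, a2) * u (b1, a2))
      = ∑ a2 : A2, P (a1, a2) * u (a1, a2) := by
    have hsum : (∑ a1 : A1, ∑ a2 : A2, P (a1, a2) * u (a1, a2))
        = ∑ a1 : A1, (Finset.univ : Finset A1).sup' Finset.univ_nonempty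
          (fun b1 => ∑ a2 : A2, P (a1, a2) * u (b1, a2)) := by
      rw [← hdec1, h2]
    intro a1
    exact ((Finset.sum_eq_sum_iff_of_le (fun i _ => hle_sup i)).mp hsum a1
      (Finset.mem_univ a1)).symm
  refine ⟨⟨?_, ?_⟩, hinf, hsup⟩
  · intro r b
    have hb : (∑ a2 : A2, P (r, a2) * u (b, a2))
        ≤ ∑ a2 : A2, P (r, a2) * u (r, a2) := by
      have := Finset.le_sup' (f := fun b1 => ∑ a2 : A2, P (r, a2) * u (b1, a2))
        (Finset.mem_univ b)
      rw [hsup r] at this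
      exact this
    have : (0:ℝ) ≤ (∑ a2 : A2, P (r, a2) * u (r, a2))
        - ∑ a2 : A2, P (r, a2) * u (b, a2) := by linarith
    calc (0:ℝ) ≤ _ := this
      _ = ∑ a2 : A2, P (r, a2) * (u (r, a2) - u (b, a2)) := by
        rw [← Finset.sum_sub_distrib]
        exact Finset.sum_congr rfl fun x _ => by ring
  · intro r b
    have hb : (∑ a1 : A1, P (a1, r) * u (a1, r))
        ≤ ∑ a1 : A1, P (a1, r) * u (a1, b) := by
      have := Finset.inf'_le (f := fun b2 => ∑ a1 : A1, P (a1, r) * u (a1, b2))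
        (Finset.mem_univ b)
      rw [hinf r] at this
      exact this
    have h0 : (0:ℝ) ≤ (∑ a1 : A1, P (a1, r) * u (a1, b))
        - ∑ a1 : A1, P (a1, r) * u (a1, r) := by linarith
    calc (0:ℝ) ≤ _ := h0
      _ = ∑ a1 : A1, P (a1, r) * (-u (a1, r) - -u (a1, b)) := by
        rw [← Finset.sum_sub_distrib]
        exact Finset.sum_congr rfl fun x _ => by ring
end

section
/- In the 2×2 game with payoffs (u_1,u_2)(U,L) = (0,1), (U,R) = (1,0), (D,L) = (1,0), (D,R) = (0,2), every correlated distribution P satisfies 3·π_1(P) + 2·π_2(P) ≤ 3. -/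
open Finset

variable {A1 A2 : Type*} [Fintype A1] [Fintype A2] [DecidableEq A1] [DecidableEq A2]

/-- Player 1's payoff in the 2×2 game (`true = U`, `false = D` for player 1;
`true = L`, `false = R` for player 2): `(U,L) ↦ 0`, `(U,R) ↦ 1`, `(D,L) ↦ 1`,
`(D,R) ↦ 0`. -/
noncomputable def uA : Bool × Bool → ℝ
  | (true, true) => 0
  | (true, false) => 1
  | (false, true) => 1
  | (false, false) => 0

/-- Player 2's payoff in the 2×2 game: `(U,L) ↦ 1`, `(U,R) ↦ 0`, `(D,L) ↦ 0`,
`(D,R) ↦ 2`. -/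
noncomputable def uB : Bool × Bool → ℝ
  | (true, true) => 1
  | (true, false) => 0
  | (false, true) => 0
  | (false, false) => 2

lemma perf1_le_of (P : Bool × Bool → ℝ) (δ : Bool → Bool)
    (h : ∀ r : Bool, δ r = r ∨ 0 < gain2 uB P r (δ r)) :
    perf1 uA uB P ≤ ∑ a : Bool × Bool, P a * uA (a.1, δ a.2) := by
  apply csInf_le
  · apply Set.Finite.bddBelow
    apply Set.Finite.subset (Set.finite_range
      (fun δ : Bool → Bool => ∑ a : Bool × Bool, P a * uA (a.1, δ a.2)))
    rintro x ⟨δ', _, rfl⟩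
    exact ⟨δ', rfl⟩
  · exact ⟨δ, h, rfl⟩

lemma perf2_le_of (P : Bool × Bool → ℝ) (δ : Bool → Bool)
    (h : ∀ r : Bool, δ r = r ∨ 0 < gain1 uA P r (δ r)) :
    perf2 uA uB P ≤ ∑ a : Bool × Bool, P a * uB (δ a.1, a.2) := by
  apply csInf_le
  · apply Set.Finite.bddBelow
    apply Set.Finite.subset (Set.finite_range
      (fun δ : Bool → Bool => ∑ a : Bool × Bool, P a * uB (δ a.1, a.2)))
    rintro x ⟨δ', _, rfl⟩
    exact ⟨δ', rfl⟩
  · exact ⟨δ, h, rfl⟩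

/-- in the 2×2 game, every correlated distribution `P` satisfies
`3·π_1(P) + 2·π_2(P) ≤ 3`. -/
theorem weighted_perf_bound :
    ∀ P ∈ stdSimplex ℝ (Bool × Bool),
      3 * perf1 uA uB P + 2 * perf2 uA uB P ≤ 3 := by
  intro P hP
  obtain ⟨hnn, hsum⟩ := hP
  set p := P (true, true) with hp
  set q := P (true, false) with hq
  set r := P (false, true) with hr
  set s := P (false, false) with hs
  have hsum' : p + q + r + s = 1 := by
    have := hsum
    rw [Fintype.sum_prod_type] at this
    simp only [Fintype.sum_bool] at this
    linarith [this]
  have hp0 : 0 ≤ p := hnn _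
  have hq0 : 0 ≤ q := hnn _
  have hr0 : 0 ≤ r := hnn _
  have hs0 : 0 ≤ s := hnn _
  -- perf1 ≤ q + r (identity)
  have h1id : perf1 uA uB P ≤ q + r := by
    have := perf1_le_of P id (fun r => Or.inl rfl)
    simp only [Fintype.sum_prod_type, Fintype.sum_bool, id, uA] at this
    linarith [this]
  -- perf2 ≤ p + 2s (identity)
  have h2id : perf2 uA uB P ≤ p + 2 * s := by
    have := perf2_le_of P id (fun r => Or.inl rfl)
    simp only [Fintype.sum_prod_type, Fintype.sum_bool, id, uB] at this
    linarith [this]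
  -- perf1 ≤ p + q if 2r > p
  have h1a : p < 2 * r → perf1 uA uB P ≤ p + q := by
    intro hc
    have hg : 0 < gain2 uB P true false := by
      simp only [gain2, Fintype.sum_bool, uB]
      ring_nf
      linarith
    have := perf1_le_of P (fun _ => false) (by
      intro rr
      cases rr
      · exact Or.inl rfl
      · exact Or.inr hg)
    simp only [Fintype.sum_prod_type, Fintype.sum_bool, uA] at this
    linarith [this]
  -- perf1 ≤ r + s if q > 2s
  have h1b : 2 * s < q → perf1 uA uB P ≤ r + s := by
    intro hc
    have hg : 0 < gain2 uB P false true := by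
      simp only [gain2, Fintype.sum_bool, uB]
      ring_nf
      linarith
    have := perf1_le_of P (fun _ => true) (by
      intro rr
      cases rr
      · exact Or.inr hg
      · exact Or.inl rfl)
    simp only [Fintype.sum_prod_type, Fintype.sum_bool, uA] at this
    linarith [this]
  -- perf2 ≤ p + r if s > r
  have h2D : r < s → perf2 uA uB P ≤ p + r := by
    intro hc
    have hg : 0 < gain1 uA P false true := by
      simp only [gain1, Fintype.sum_bool, uA]
      ring_nf
      linarith
    have := perf2_le_of P (fun _ => true) (by
      intro rr
      cases rr
      · exact Or.inr hg
      · exact Or.inl rfl)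
    simp only [Fintype.sum_prod_type, Fintype.sum_bool, uB] at this
    linarith [this]
  rcases lt_or_ge r s with hc4 | hc4
  · -- s > r : use h1id, h2D
    have := h2D hc4
    linarith
  · rcases lt_or_ge p (2 * r) with hc1 | hc1
    · -- 2r > p : use h1id, h1a, h2id
      have := h1a hc1
      linarith
    · rcases lt_or_ge (2 * s) q with hc2 | hc2
      · -- q > 2s : use h1id, h1b, h2id
        have := h1b hc2
        linarith
      · -- use h1id, h2id
        linarith
end

section
/- In the 2×2 game with payoffs (u_1,u_2)(U,L) = (0,1), (U,R) = (1,0), (D,L) = (1,0), (D,R) = (0,2), the correlated distribution Q with Q(U,L) = 7/30, Q(U,R) = 3/10, Q(D,L) = 7/30, Q(D,R) = 7/30 is a correlated optimin, and its performance vector (π_1(Q), π_2(Q)) = (8/15, 7/10) strictly Pareto dominates the expected payoff vector (1/2, 2/3) of the unique correlated equilibrium. -/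
open Finset

variable {A1 A2 : Type*} [Fintype A1] [Fintype A2] [DecidableEq A1] [DecidableEq A2]

/-- The distribution `Q`: `(U,L) ↦ 7/30`, `(U,R) ↦ 3/10`, `(D,L) ↦ 7/30`,
`(D,R) ↦ 7/30`. -/
noncomputable def Q0 : Bool × Bool → ℝ
  | (true, true) => 7/30
  | (true, false) => 3/10
  | (false, true) => 7/30
  | (false, false) => 7/30

lemma sum_bb (f : Bool × Bool → ℝ) :
    ∑ a : Bool × Bool, f a =
      f (true, true) + f (true, false) + f (false, true) + f (false, false) := by
  rw [Fintype.sum_prod_type]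
  simp [Fintype.sum_bool]
  ring

lemma bdd1 (u1 u2 P : Bool × Bool → ℝ) :
    BddBelow {x | ∃ δ : Bool → Bool,
      (∀ r : Bool, δ r = r ∨ 0 < gain2 u2 P r (δ r)) ∧
      x = ∑ a : Bool × Bool, P a * u1 (a.1, δ a.2)} := by
  apply Set.Finite.bddBelow
  apply Set.Finite.subset
    (Set.finite_range fun δ : Bool → Bool => ∑ a : Bool × Bool, P a * u1 (a.1, δ a.2))
  rintro x ⟨δ, -, rfl⟩
  exact ⟨δ, rfl⟩

lemma bdd2 (u1 u2 P : Bool × Bool → ℝ) :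
    BddBelow {x | ∃ δ : Bool → Bool,
      (∀ r : Bool, δ r = r ∨ 0 < gain1 u1 P r (δ r)) ∧
      x = ∑ a : Bool × Bool, P a * u2 (δ a.1, a.2)} := by
  apply Set.Finite.bddBelow
  apply Set.Finite.subset
    (Set.finite_range fun δ : Bool → Bool => ∑ a : Bool × Bool, P a * u2 (δ a.1, a.2))
  rintro x ⟨δ, -, rfl⟩
  exact ⟨δ, rfl⟩

lemma perf1_le (u1 u2 P : Bool × Bool → ℝ) (δ : Bool → Bool)
    (h : ∀ r : Bool, δ r = r ∨ 0 < gain2 u2 P r (δ r)) :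
    perf1 u1 u2 P ≤ ∑ a : Bool × Bool, P a * u1 (a.1, δ a.2) :=
  csInf_le (bdd1 u1 u2 P) ⟨δ, h, rfl⟩

lemma perf2_le (u1 u2 P : Bool × Bool → ℝ) (δ : Bool → Bool)
    (h : ∀ r : Bool, δ r = r ∨ 0 < gain1 u1 P r (δ r)) :
    perf2 u1 u2 P ≤ ∑ a : Bool × Bool, P a * u2 (δ a.1, a.2) :=
  csInf_le (bdd2 u1 u2 P) ⟨δ, h, rfl⟩

lemma perf1_Q0 : perf1 uA uB Q0 = 8/15 := by
  have hset : {x | ∃ δ : Bool → Bool,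
      (∀ r : Bool, δ r = r ∨ 0 < gain2 uB Q0 r (δ r)) ∧
      x = ∑ a : Bool × Bool, Q0 a * uA (a.1, δ a.2)} = {(8:ℝ)/15} := by
    ext x
    simp only [Set.mem_setOf_eq, Set.mem_singleton_iff]
    constructor
    · rintro ⟨δ, h, rfl⟩
      have hf : δ false = false := by
        rcases h false with h' | h'
        · exact h'
        · cases hb : δ false with
          | false => rfl
          | true =>
            rw [hb] at h'
            simp only [gain2, Fintype.sum_bool] at h'
            norm_num [uB, Q0] at h'
      cases ht : δ true <;>
        · rw [sum_bb]
          simp only [ht, hf]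
          norm_num [uA, Q0]
    · rintro rfl
      refine ⟨id, fun r => Or.inl rfl, ?_⟩
      rw [sum_bb]
      norm_num [uA, Q0]
  rw [perf1, hset, csInf_singleton]

lemma perf2_Q0 : perf2 uA uB Q0 = 7/10 := by
  have hset : {x | ∃ δ : Bool → Bool,
      (∀ r : Bool, δ r = r ∨ 0 < gain1 uA Q0 r (δ r)) ∧
      x = ∑ a : Bool × Bool, Q0 a * uB (δ a.1, a.2)} = {(7:ℝ)/10} := by
    ext x
    simp only [Set.mem_setOf_eq, Set.mem_singleton_iff]
    constructor
    · rintro ⟨δ, h, rfl⟩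
      have hf : δ false = false := by
        rcases h false with h' | h'
        · exact h'
        · cases hb : δ false with
          | false => rfl
          | true =>
            rw [hb] at h'
            simp only [gain1, Fintype.sum_bool] at h'
            norm_num [uA, Q0] at h'
      have ht : δ true = true := by
        rcases h true with h' | h'
        · exact h'
        · cases hb : δ true with
          | true => rfl
          | false =>
            rw [hb] at h'
            simp only [gain1, Fintype.sum_bool] at h'
            norm_num [uA, Q0] at h'
      rw [sum_bb]
      simp only [ht, hf]
      norm_num [uB, Q0]
    · rintro rfl
      refine ⟨id, fun r => Or.inl rfl, ?_⟩
      rw [sum_bb]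
      norm_num [uB, Q0]
  rw [perf2, hset, csInf_singleton]

/-- in the 2×2 game, `Q` is a correlated optimin (Pareto undominated
with respect to `(π_1, π_2)`), its performance vector is `(8/15, 7/10)`, and this
vector strictly Pareto dominates the expected payoff vector of every (hence of the
unique) correlated equilibrium, whose payoff vector is `(1/2, 2/3)`. -/
theorem Q_is_correlated_optimin_and_dominates_CE :
    Q0 ∈ stdSimplex ℝ (Bool × Bool) ∧
    (¬ ∃ Q' ∈ stdSimplex ℝ (Bool × Bool),
        (perf1 uA uB Q0 ≤ perf1 uA uB Q' ∧ perf2 uA uB Q0 ≤ perf2 uA uB Q') ∧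
        (perf1 uA uB Q0 < perf1 uA uB Q' ∨ perf2 uA uB Q0 < perf2 uA uB Q')) ∧
    perf1 uA uB Q0 = 8/15 ∧ perf2 uA uB Q0 = 7/10 ∧
    (∀ P ∈ stdSimplex ℝ (Bool × Bool), IsCE2 uA uB P →
      (∑ a : Bool × Bool, P a * uA a) = 1/2 ∧
      (∑ a : Bool × Bool, P a * uB a) = 2/3 ∧
      (∑ a : Bool × Bool, P a * uA a) < perf1 uA uB Q0 ∧
      (∑ a : Bool × Bool, P a * uB a) < perf2 uA uB Q0) := by
  refine ⟨?_, ?_, perf1_Q0, perf2_Q0, ?_⟩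
  · constructor
    · intro a
      rcases a with ⟨b1, b2⟩ <;> cases b1 <;> cases b2 <;> norm_num [Q0]
    · rw [sum_bb]; norm_num [Q0]
  · rintro ⟨Q', hQ', ⟨hge1, hge2⟩, hstrict⟩
    rw [perf1_Q0] at hge1 hstrict
    rw [perf2_Q0] at hge2 hstrict
    obtain ⟨hpos, hsum⟩ := hQ'
    set q1 := Q' (true, true) with hq1
    set q2 := Q' (true, false) with hq2
    set q3 := Q' (false, true) with hq3
    set q4 := Q' (false, false) with hq4
    have h1 : 0 ≤ q1 := hpos _
    have h2 : 0 ≤ q2 := hpos _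
    have h3 : 0 ≤ q3 := hpos _
    have h4 : 0 ≤ q4 := hpos _
    have hs : q1 + q2 + q3 + q4 = 1 := by rw [← sum_bb Q']; exact hsum
    -- upper bound via identity deviation for player 1
    have hid1 : perf1 uA uB Q' ≤ q2 + q3 := by
      have := perf1_le uA uB Q' id (fun r => Or.inl rfl)
      rw [sum_bb] at this
      simp only [id] at this
      norm_num [uA] at this
      linarith [this]
    -- upper bound via identity deviation for player 2
    have hid2 : perf2 uA uB Q' ≤ q1 + 2 * q4 := by
      have := perf2_le uA uB Q' id (fun r => Or.inl rfl)
      rw [sum_bb] at this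
      simp only [id] at this
      norm_num [uB] at this
      linarith [this]
    have h23 : 8/15 ≤ q2 + q3 := le_trans hge1 hid1
    have h14 : 7/10 ≤ q1 + 2 * q4 := le_trans hge2 hid2
    -- the strict inequality forces q4 > 7/30
    have hq4big : 7/30 < q4 := by
      rcases hstrict with h | h
      · have : 8/15 < q2 + q3 := lt_of_lt_of_le h hid1
        linarith
      · have : 7/10 < q1 + 2 * q4 := lt_of_lt_of_le h hid2
        linarith
    -- helper: if q1 < 2*q3 then perf1 Q' ≤ q1 + q2
    have hkey : q1 < 2 * q3 → perf1 uA uB Q' ≤ q1 + q2 := by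
      intro hlt
      have hadm : ∀ r : Bool, (fun _ : Bool => false) r = r ∨
          0 < gain2 uB Q' r ((fun _ : Bool => false) r) := by
        intro r
        cases r with
        | false => exact Or.inl rfl
        | true =>
          refine Or.inr ?_
          simp only [gain2, Fintype.sum_bool]
          norm_num [uB]
          linarith
      have := perf1_le uA uB Q' (fun _ => false) hadm
      rw [sum_bb] at this
      norm_num [uA] at this
      linarith [this]
    rcases le_or_gt q4 q3 with hc | hc
    · -- q3 ≥ q4 > 7/30, so q1 ≤ 7/30 < 2*q3
      have hlt : q1 < 2 * q3 := by linarith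
      have := le_trans hge1 (hkey hlt)
      linarith
    · -- q3 < q4: const-true deviation admissible for player 1
      have hadm : ∀ r : Bool, (fun _ : Bool => true) r = r ∨
          0 < gain1 uA Q' r ((fun _ : Bool => true) r) := by
        intro r
        cases r with
        | true => exact Or.inl rfl
        | false =>
          refine Or.inr ?_
          simp only [gain1, Fintype.sum_bool]
          norm_num [uA]
          linarith
      have hble := perf2_le uA uB Q' (fun _ => true) hadm
      rw [sum_bb] at hble
      norm_num [uB] at hble
      have h13 : 7/10 ≤ q1 + q3 := by linarith [le_trans hge2 hble]
      linarith
  · intro P hP hCE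
    obtain ⟨hpos, hsum⟩ := hP
    obtain ⟨hCE1, hCE2⟩ := hCE
    set p1 := P (true, true)
    set p2 := P (true, false)
    set p3 := P (false, true)
    set p4 := P (false, false)
    have hs : p1 + p2 + p3 + p4 = 1 := by rw [← sum_bb P]; exact hsum
    have e1 := hCE1 true false
    have e2 := hCE1 false true
    have e3 := hCE2 true false
    have e4 := hCE2 false true
    simp only [Fintype.sum_bool] at e1 e2 e3 e4
    norm_num [uA, uB] at e1 e2 e3 e4
    -- e1 : p1 ≤ p2, e2 : p4 ≤ p3, e3 : 2p3 ≤ p1, e4 : p2 ≤ 2p4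
    have hA : (∑ a : Bool × Bool, P a * uA a) = 1/2 := by
      rw [sum_bb]; norm_num [uA]; linarith
    have hB : (∑ a : Bool × Bool, P a * uB a) = 2/3 := by
      rw [sum_bb]; norm_num [uB]; linarith
    rw [hA, hB, perf1_Q0, perf2_Q0]
    norm_num
end

section
/- If P is a correlated equilibrium of a finite normal-form game Γ, then for every player i the mixed-deviation correlated optimin performance equals the ordinary expected payoff: π_i^m(P) = Σ_{a∈A} P(a) u_i(a). -/
open Finset

variable {I : Type*} [Fintype I] [DecidableEq I] [Nonempty I]
variable {A : I → Type*} [∀ i, Fintype (A i)] [∀ i, DecidableEq (A i)]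
  [∀ i, Nonempty (A i)]

/-- The point mass `e_r` on an action `r`. -/
noncomputable def pointMass {α : Type*} [DecidableEq α] (r : α) : α → ℝ :=
  fun b => if b = r then 1 else 0

/-- The unnormalized gain of player `j` from switching to the mixed action `q`
after receiving recommendation `r`:
`Σ_{a_{-j}} P(r, a_{-j}) · [u_j(q, a_{-j}) − u_j(r, a_{-j})]`, where
`u_j(q, a_{-j}) = Σ_b q(b) u_j(b, a_{-j})`. -/
noncomputable def mgain (u : I → (∀ i, A i) → ℝ) (P : (∀ i, A i) → ℝ)
    (j : I) (r : A j) (q : A j → ℝ) : ℝ :=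
  ∑ a : ∀ i, A i,
    if a j = r then
      P a * ((∑ b : A j, q b * u j (Function.update a j b)) - u j a)
    else 0

/-- `σ` is an admissible mixed recommendation-contingent deviation profile for the
opponents of player `i`: each `σ j r` lies in
`M_j^P(r) = {e_r} ∪ {q ∈ Δ(A_j) : mixed gain > 0}`. -/
def MAdmissible (u : I → (∀ i, A i) → ℝ) (P : (∀ i, A i) → ℝ) (i : I)
    (σ : ∀ j, A j → A j → ℝ) : Prop :=
  ∀ j, j ≠ i → ∀ r : A j,
    σ j r = pointMass r ∨
      (σ j r ∈ stdSimplex ℝ (A j) ∧ 0 < mgain u P j r (σ j r))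

/-- `Σ_a P(a) · U_i(a_i, σ_{-i}(a_{-i}))`, where
`U_i(a_i, σ_{-i}(a_{-i})) = Σ_{b_{-i}} (Π_{j≠i} σ_j(a_j)(b_j)) u_i(a_i, b_{-i})`;
the point mass at coordinate `i` fixes `b_i = a_i`. -/
noncomputable def mixedPayoff (u : I → (∀ i, A i) → ℝ) (P : (∀ i, A i) → ℝ)
    (i : I) (σ : ∀ j, A j → A j → ℝ) : ℝ :=
  ∑ a : ∀ j, A j, P a *
    ∑ b : ∀ j, A j,
      (∏ j : I, if j = i then pointMass (a j) (b j) else σ j (a j) (b j)) * u i b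

/-- Mixed-deviation correlated optimin performance of player `i`:
`π_i^m(P) = inf_{σ_{-i} ∈ M_{-i}^P} Σ_a P(a) U_i(a_i, σ_{-i}(a_{-i}))`. -/
noncomputable def mperf (u : I → (∀ i, A i) → ℝ) (P : (∀ i, A i) → ℝ) (i : I) : ℝ :=
  sInf {x | ∃ σ : ∀ j, A j → A j → ℝ, MAdmissible u P i σ ∧ x = mixedPayoff u P i σ}

lemma prod_pointMass_aux (a b : ∀ i, A i) :
    (∏ j : I, pointMass (a j) (b j)) = if b = a then 1 else 0 := by
  by_cases h : b = a
  · simp [h, pointMass]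
  · obtain ⟨j, hj⟩ := Function.ne_iff.mp h
    rw [if_neg h]
    apply Finset.prod_eq_zero (Finset.mem_univ j)
    show (if b j = a j then (1:ℝ) else 0) = 0
    exact if_neg hj

lemma mgain_nonpos (u : I → (∀ i, A i) → ℝ) (P : (∀ i, A i) → ℝ)
    (hCE : IsCE u P) (j : I) (r : A j) (q : A j → ℝ)
    (hq : q ∈ stdSimplex ℝ (A j)) : mgain u P j r q ≤ 0 := by
  have hq1 : ∑ b : A j, q b = 1 := hq.2
  have key : mgain u P j r q = ∑ b : A j, q b *
      ∑ a : ∀ i, A i,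
        (if a j = r then P a * (u j (Function.update a j b) - u j a) else 0) := by
    calc mgain u P j r q
        = ∑ a : ∀ i, A i, ∑ b : A j,
            (if a j = r then q b * (P a * (u j (Function.update a j b) - u j a)) else 0) := by
          unfold mgain
          refine Finset.sum_congr rfl fun a _ => ?_
          by_cases h : a j = r
          · simp only [h, if_true]
            have h1 : ∀ b : A j, q b * (P a * (u j (Function.update a j b) - u j a))
                = P a * (q b * u j (Function.update a j b)) - P a * u j a * q b := by
              intro b; ring
            rw [Finset.sum_congr rfl fun b _ => h1 b, Finset.sum_sub_distrib,
              ← Finset.mul_sum, ← Finset.mul_sum, hq1, mul_one]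
            ring
          · simp [h]
      _ = ∑ b : A j, ∑ a : ∀ i, A i,
            (if a j = r then q b * (P a * (u j (Function.update a j b) - u j a)) else 0) :=
          Finset.sum_comm
      _ = ∑ b : A j, q b * ∑ a : ∀ i, A i,
            (if a j = r then P a * (u j (Function.update a j b) - u j a) else 0) := by
          refine Finset.sum_congr rfl fun b _ => ?_
          rw [Finset.mul_sum]
          refine Finset.sum_congr rfl fun a _ => ?_
          by_cases h : a j = r <;> simp [h]
  rw [key]
  refine Finset.sum_nonpos fun b _ => mul_nonpos_of_nonneg_of_nonpos (hq.1 b) ?_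
  have hneg : ∀ a : ∀ i, A i,
      (if a j = r then P a * (u j (Function.update a j b) - u j a) else 0)
        = -(if a j = r then P a * (u j a - u j (Function.update a j b)) else 0) := by
    intro a
    by_cases h : a j = r <;> simp [h] <;> ring
  rw [Finset.sum_congr rfl fun a _ => hneg a, Finset.sum_neg_distrib]
  linarith [hCE j r b]

/-- at a correlated equilibrium, the mixed-deviation correlated
optimin performance of every player equals the ordinary expected payoff. -/
theorem mperf_eq_expected_of_CE
    (u : I → (∀ i, A i) → ℝ) (P : (∀ i, A i) → ℝ)
    (hP : P ∈ stdSimplex ℝ (∀ i, A i)) (hCE : IsCE u P) (i : I) :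
    mperf u P i = ∑ a : ∀ j, A j, P a * u i a := by
  have hval : ∀ σ : ∀ j, A j → A j → ℝ, MAdmissible u P i σ →
      mixedPayoff u P i σ = ∑ a : ∀ j, A j, P a * u i a := by
    intro σ hσ
    unfold mixedPayoff
    refine Finset.sum_congr rfl fun a _ => ?_
    congr 1
    have hprod : ∀ b : ∀ j, A j,
        (∏ j : I, if j = i then pointMass (a j) (b j) else σ j (a j) (b j))
          = if b = a then 1 else 0 := by
      intro b
      rw [show (∏ j : I, if j = i then pointMass (a j) (b j) else σ j (a j) (b j))
            = ∏ j : I, pointMass (a j) (b j) from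
          Finset.prod_congr rfl fun j _ => by
            by_cases hj : j = i
            · simp [hj]
            · rcases hσ j hj (a j) with h | ⟨h1, h2⟩
              · simp [hj, h]
              · exact absurd h2 (not_lt.mpr (mgain_nonpos u P hCE j (a j) _ h1)),
        prod_pointMass_aux]
    calc (∑ b : ∀ j, A j,
          (∏ j : I, if j = i then pointMass (a j) (b j) else σ j (a j) (b j)) * u i b)
        = ∑ b : ∀ j, A j, (if b = a then 1 else 0) * u i b :=
          Finset.sum_congr rfl fun b _ => by rw [hprod b]
      _ = u i a := by simp
  unfold mperf
  have hset : {x | ∃ σ : ∀ j, A j → A j → ℝ,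
      MAdmissible u P i σ ∧ x = mixedPayoff u P i σ}
      = {∑ a : ∀ j, A j, P a * u i a} := by
    ext x
    simp only [Set.mem_setOf_eq, Set.mem_singleton_iff]
    constructor
    · rintro ⟨σ, hσ, rfl⟩
      exact hval σ hσ
    · rintro rfl
      exact ⟨fun j r => pointMass r, fun j _ r => Or.inl rfl,
        (hval _ (fun j _ r => Or.inl rfl)).symm⟩
  rw [hset, csInf_singleton]
end

section
/- For every player i of a finite normal-form game Γ, the mixed-deviation performance function P ↦ π_i^m(P) is upper semicontinuous on the probability simplex Δ(A). -/
open Finset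

variable {I : Type*} [Fintype I] [DecidableEq I] [Nonempty I]
variable {A : I → Type*} [∀ i, Fintype (A i)] [∀ i, DecidableEq (A i)]
  [∀ i, Nonempty (A i)]

lemma pointMass_mem_Icc {α : Type*} [DecidableEq α] (r b : α) :
    pointMass r b ∈ Set.Icc (0:ℝ) 1 := by
  unfold pointMass; split <;> norm_num

lemma stdSimplex_mem_Icc {α : Type*} [Fintype α] {q : α → ℝ}
    (hq : q ∈ stdSimplex ℝ α) (b : α) : q b ∈ Set.Icc (0:ℝ) 1 := by
  refine ⟨hq.1 b, ?_⟩
  calc q b ≤ ∑ x, q x := Finset.single_le_sum (fun x _ => hq.1 x) (Finset.mem_univ b)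
    _ = 1 := hq.2

lemma mixedPayoff_bound (u : I → (∀ i, A i) → ℝ) {P : (∀ i, A i) → ℝ}
    (hP : P ∈ stdSimplex ℝ (∀ i, A i)) (i : I) {σ : ∀ j, A j → A j → ℝ}
    (hσ : MAdmissible u P i σ) :
    -(∑ b : ∀ j, A j, |u i b|) ≤ mixedPayoff u P i σ := by
  set C := ∑ b : ∀ j, A j, |u i b| with hC
  have hinner : ∀ a : ∀ j, A j,
      -C ≤ ∑ b : ∀ j, A j,
        (∏ j : I, if j = i then pointMass (a j) (b j) else σ j (a j) (b j)) * u i b := by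
    intro a
    rw [hC, ← Finset.sum_neg_distrib]
    apply Finset.sum_le_sum
    intro b _
    set p := ∏ j : I, if j = i then pointMass (a j) (b j) else σ j (a j) (b j) with hp
    have hp01 : p ∈ Set.Icc (0:ℝ) 1 := by
      constructor
      · apply Finset.prod_nonneg; intro j _
        split
        · exact (pointMass_mem_Icc _ _).1
        · rcases hσ j (by assumption) (a j) with h | ⟨h, _⟩
          · rw [h]; exact (pointMass_mem_Icc _ _).1
          · exact (stdSimplex_mem_Icc h _).1
      · apply Finset.prod_le_one
        · intro j _
          split
          · exact (pointMass_mem_Icc _ _).1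
          · rcases hσ j (by assumption) (a j) with h | ⟨h, _⟩
            · rw [h]; exact (pointMass_mem_Icc _ _).1
            · exact (stdSimplex_mem_Icc h _).1
        · intro j _
          split
          · exact (pointMass_mem_Icc _ _).2
          · rcases hσ j (by assumption) (a j) with h | ⟨h, _⟩
            · rw [h]; exact (pointMass_mem_Icc _ _).2
            · exact (stdSimplex_mem_Icc h _).2
    calc -|u i b| ≤ -(p * |u i b|) := by
          apply neg_le_neg
          exact mul_le_of_le_one_left (abs_nonneg _) hp01.2
      _ = p * (-|u i b|) := by ring
      _ ≤ p * u i b := mul_le_mul_of_nonneg_left (neg_abs_le _) hp01.1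
  unfold mixedPayoff
  calc -C = ∑ a : ∀ j, A j, P a * (-C) := by
        rw [← Finset.sum_mul, hP.2]; ring
    _ ≤ _ := Finset.sum_le_sum fun a _ =>
        mul_le_mul_of_nonneg_left (hinner a) (hP.1 a)

lemma continuous_mixedPayoff (u : I → (∀ i, A i) → ℝ) (i : I)
    (σ : ∀ j, A j → A j → ℝ) :
    Continuous fun P : (∀ i, A i) → ℝ => mixedPayoff u P i σ := by
  unfold mixedPayoff
  exact continuous_finset_sum _ fun a _ => (continuous_apply a).mul continuous_const

lemma continuous_mgain (u : I → (∀ i, A i) → ℝ) (j : I) (r : A j) (q : A j → ℝ) :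
    Continuous fun P : (∀ i, A i) → ℝ => mgain u P j r q := by
  unfold mgain
  apply continuous_finset_sum
  intro a _
  by_cases h : a j = r
  · simp only [h, if_true]
    exact (continuous_apply a).mul continuous_const
  · simp only [h, if_false]
    exact continuous_const

/-- for every player `i`, the mixed-deviation performance
`P ↦ π_i^m(P)` is upper semicontinuous on the probability simplex `Δ(A)`. -/
theorem mperf_upperSemicontinuousOn
    (u : I → (∀ i, A i) → ℝ) (i : I) :
    UpperSemicontinuousOn (fun P : (∀ i, A i) → ℝ => mperf u P i)
      (stdSimplex ℝ (∀ i, A i)) := by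
  intro P₀ hP₀ y hy
  simp only [mperf] at hy
  have hne : {x | ∃ σ : ∀ j, A j → A j → ℝ,
      MAdmissible u P₀ i σ ∧ x = mixedPayoff u P₀ i σ}.Nonempty :=
    ⟨_, fun j r => pointMass r, fun j _ r => Or.inl rfl, rfl⟩
  obtain ⟨x, ⟨σ, hσ, rfl⟩, hxy⟩ := exists_lt_of_csInf_lt hne hy
  have h1 : ∀ᶠ P in nhds P₀, mixedPayoff u P i σ < y :=
    ((continuous_mixedPayoff u i σ).continuousAt).eventually_lt continuousAt_const hxy
  have h2 : ∀ᶠ P in nhds P₀, MAdmissible u P i σ := by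
    unfold MAdmissible
    rw [Filter.eventually_all]
    intro j
    by_cases hji : j = i
    · exact Filter.Eventually.of_forall fun P h => absurd hji h
    · have : ∀ᶠ P in nhds P₀, ∀ r : A j,
          σ j r = pointMass r ∨
            (σ j r ∈ stdSimplex ℝ (A j) ∧ 0 < mgain u P j r (σ j r)) := by
        rw [Filter.eventually_all]
        intro r
        rcases hσ j hji r with h | ⟨hs, hg⟩
        · exact Filter.Eventually.of_forall fun P => Or.inl h
        · have := continuousAt_const.eventually_lt
            (continuous_mgain u j r (σ j r)).continuousAt hg
          exact this.mono fun P hP => Or.inr ⟨hs, hP⟩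
      exact this.mono fun P h _ => h
  filter_upwards [nhdsWithin_le_nhds h1, nhdsWithin_le_nhds h2,
    self_mem_nhdsWithin] with P hP1 hP2 hPs
  have hbdd : BddBelow {x | ∃ σ : ∀ j, A j → A j → ℝ,
      MAdmissible u P i σ ∧ x = mixedPayoff u P i σ} := by
    refine ⟨-(∑ b : ∀ j, A j, |u i b|), ?_⟩
    rintro x ⟨τ, hτ, rfl⟩
    exact mixedPayoff_bound u hPs i hτ
  calc mperf u P i ≤ mixedPayoff u P i σ := csInf_le hbdd ⟨σ, hP2, rfl⟩
    _ < y := hP1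
end

section
/- Every finite normal-form game has at least one mixed-deviation correlated optimin: there exists P̄ ∈ Δ(A) such that no Q ∈ Δ(A) satisfies π_i^m(Q) ≥ π_i^m(P̄) for every player i with strict inequality for at least one player. -/
open Finset

variable {I : Type*} [Fintype I] [DecidableEq I] [Nonempty I]
variable {A : I → Type*} [∀ i, Fintype (A i)] [∀ i, DecidableEq (A i)]
  [∀ i, Nonempty (A i)]

set_option linter.unusedSectionVars false


lemma mAdmissible_pointMass (u : I → (∀ i, A i) → ℝ) (P : (∀ i, A i) → ℝ) (i : I) :
    MAdmissible u P i (fun _ r => pointMass r) := fun _ _ _ => Or.inl rfl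

lemma admissible_entry_nonneg {u : I → (∀ i, A i) → ℝ} {P : (∀ i, A i) → ℝ} {i : I}
    {σ : ∀ j, A j → A j → ℝ} (hσ : MAdmissible u P i σ) {j : I} (hj : j ≠ i)
    (r b : A j) : 0 ≤ σ j r b ∧ σ j r b ≤ 1 := by
  rcases hσ j hj r with h | ⟨⟨h0, h1⟩, _⟩
  · rw [h]; unfold pointMass; split <;> norm_num
  · refine ⟨h0 b, ?_⟩
    calc σ j r b ≤ ∑ x : A j, σ j r x :=
          Finset.single_le_sum (fun x _ => h0 x) (Finset.mem_univ b)
      _ = 1 := h1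

lemma factor_bounds {u : I → (∀ i, A i) → ℝ} {P : (∀ i, A i) → ℝ} {i : I}
    {σ : ∀ j, A j → A j → ℝ} (hσ : MAdmissible u P i σ) (a b : ∀ j, A j) :
    0 ≤ (∏ j : I, if j = i then pointMass (a j) (b j) else σ j (a j) (b j)) ∧
      (∏ j : I, if j = i then pointMass (a j) (b j) else σ j (a j) (b j)) ≤ 1 := by
  constructor
  · refine Finset.prod_nonneg fun j _ => ?_
    by_cases hj : j = i
    · simp only [if_pos hj]; unfold pointMass; split <;> norm_num
    · simp only [if_neg hj]; exact (admissible_entry_nonneg hσ hj _ _).1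
  · refine Finset.prod_le_one (fun j _ => ?_) (fun j _ => ?_)
    · by_cases hj : j = i
      · simp only [if_pos hj]; unfold pointMass; split <;> norm_num
      · simp only [if_neg hj]; exact (admissible_entry_nonneg hσ hj _ _).1
    · by_cases hj : j = i
      · simp only [if_pos hj]; unfold pointMass; split <;> norm_num
      · simp only [if_neg hj]; exact (admissible_entry_nonneg hσ hj _ _).2

/-- a uniform bound on payoffs -/
noncomputable def payoffBound (u : I → (∀ i, A i) → ℝ) (i : I) : ℝ :=
  (Fintype.card (∀ j, A j) : ℝ) * ∑ b : ∀ j, A j, |u i b|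

lemma abs_mixedPayoff_le {u : I → (∀ i, A i) → ℝ} {P : (∀ i, A i) → ℝ}
    (hP : P ∈ stdSimplex ℝ (∀ i, A i)) {i : I} {σ : ∀ j, A j → A j → ℝ}
    (hσ : MAdmissible u P i σ) : |mixedPayoff u P i σ| ≤ payoffBound u i := by
  unfold mixedPayoff payoffBound
  calc |∑ a : ∀ j, A j, P a * ∑ b : ∀ j, A j,
        (∏ j : I, if j = i then pointMass (a j) (b j) else σ j (a j) (b j)) * u i b|
      ≤ ∑ a : ∀ j, A j, |P a * ∑ b : ∀ j, A j,
        (∏ j : I, if j = i then pointMass (a j) (b j) else σ j (a j) (b j)) * u i b| :=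
        Finset.abs_sum_le_sum_abs _ _
    _ ≤ ∑ _a : ∀ j, A j, ∑ b : ∀ j, A j, |u i b| := by
        refine Finset.sum_le_sum fun a _ => ?_
        rw [abs_mul]
        have hP1 : |P a| ≤ 1 := by
          rw [abs_of_nonneg (hP.1 a)]
          calc P a ≤ ∑ x, P x := Finset.single_le_sum (fun x _ => hP.1 x) (Finset.mem_univ a)
            _ = 1 := hP.2
        have h2 : |∑ b : ∀ j, A j,
            (∏ j : I, if j = i then pointMass (a j) (b j) else σ j (a j) (b j)) * u i b|
            ≤ ∑ b : ∀ j, A j, |u i b| := by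
          refine (Finset.abs_sum_le_sum_abs _ _).trans (Finset.sum_le_sum fun b _ => ?_)
          rw [abs_mul]
          have := factor_bounds hσ a b
          calc |∏ j : I, if j = i then pointMass (a j) (b j) else σ j (a j) (b j)| * |u i b|
              ≤ 1 * |u i b| := by
                refine mul_le_mul_of_nonneg_right ?_ (abs_nonneg _)
                rw [abs_of_nonneg this.1]; exact this.2
            _ = |u i b| := one_mul _
        calc |P a| * |∑ b : ∀ j, A j,
            (∏ j : I, if j = i then pointMass (a j) (b j) else σ j (a j) (b j)) * u i b|
            ≤ 1 * (∑ b : ∀ j, A j, |u i b|) :=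
              mul_le_mul hP1 h2 (abs_nonneg _) zero_le_one
          _ = ∑ b : ∀ j, A j, |u i b| := one_mul _
    _ = (Fintype.card (∀ j, A j) : ℝ) * ∑ b : ∀ j, A j, |u i b| := by
        rw [Finset.sum_const, Finset.card_univ, nsmul_eq_mul]

lemma mperf_bddBelow (u : I → (∀ i, A i) → ℝ) {P : (∀ i, A i) → ℝ}
    (hP : P ∈ stdSimplex ℝ (∀ i, A i)) (i : I) :
    BddBelow {x | ∃ σ : ∀ j, A j → A j → ℝ, MAdmissible u P i σ ∧ x = mixedPayoff u P i σ} := by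
  refine ⟨-payoffBound u i, fun x hx => ?_⟩
  obtain ⟨σ, hσ, rfl⟩ := hx
  exact neg_le_of_abs_le (abs_mixedPayoff_le hP hσ)

lemma mperf_le {u : I → (∀ i, A i) → ℝ} {P : (∀ i, A i) → ℝ}
    (hP : P ∈ stdSimplex ℝ (∀ i, A i)) {i : I} {σ : ∀ j, A j → A j → ℝ}
    (hσ : MAdmissible u P i σ) : mperf u P i ≤ mixedPayoff u P i σ :=
  csInf_le (mperf_bddBelow u hP i) ⟨σ, hσ, rfl⟩

lemma abs_mperf_le (u : I → (∀ i, A i) → ℝ) {P : (∀ i, A i) → ℝ}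
    (hP : P ∈ stdSimplex ℝ (∀ i, A i)) (i : I) : |mperf u P i| ≤ payoffBound u i := by
  rw [abs_le]
  constructor
  · have hne : {x | ∃ σ : ∀ j, A j → A j → ℝ,
        MAdmissible u P i σ ∧ x = mixedPayoff u P i σ}.Nonempty :=
      ⟨_, fun _ r => pointMass r, mAdmissible_pointMass u P i, rfl⟩
    refine le_csInf hne ?_
    rintro x ⟨σ, hσ, rfl⟩
    exact neg_le_of_abs_le (abs_mixedPayoff_le hP hσ)
  · exact (mperf_le hP (mAdmissible_pointMass u P i)).trans
      (le_of_abs_le (abs_mixedPayoff_le hP (mAdmissible_pointMass u P i)))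

lemma mperf_usc (u : I → (∀ i, A i) → ℝ) (i : I) {Pbar : (∀ i, A i) → ℝ}
    (hPbar : Pbar ∈ stdSimplex ℝ (∀ i, A i)) {c : ℝ} (hc : mperf u Pbar i < c) :
    ∀ᶠ P in nhdsWithin Pbar (stdSimplex ℝ (∀ i, A i)), mperf u P i < c := by
  have hne : {x | ∃ σ : ∀ j, A j → A j → ℝ,
      MAdmissible u Pbar i σ ∧ x = mixedPayoff u Pbar i σ}.Nonempty :=
    ⟨_, fun _ r => pointMass r, mAdmissible_pointMass u Pbar i, rfl⟩
  obtain ⟨x, ⟨σ, hσ, rfl⟩, hx⟩ := exists_lt_of_csInf_lt hne hc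
  have hev1 : ∀ᶠ P in nhds Pbar, mixedPayoff u P i σ < c :=
    Filter.Tendsto.eventually_lt_const hx ((continuous_mixedPayoff u i σ).tendsto Pbar)
  have hev2 : ∀ᶠ P in nhds Pbar, ∀ j : I, ∀ r : A j, j ≠ i →
      (σ j r = pointMass r ∨
        (σ j r ∈ stdSimplex ℝ (A j) ∧ 0 < mgain u P j r (σ j r))) := by
    rw [Filter.eventually_all]
    intro j
    rw [Filter.eventually_all]
    intro r
    by_cases hj : j = i
    · exact Filter.Eventually.of_forall fun P h => absurd hj h
    · rcases hσ j hj r with h | ⟨h1, h2⟩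
      · exact Filter.Eventually.of_forall fun P _ => Or.inl h
      · have := Filter.Tendsto.eventually_const_lt h2
          ((continuous_mgain u j r (σ j r)).tendsto Pbar)
        exact this.mono fun P hP _ => Or.inr ⟨h1, hP⟩
  have hmem : ∀ᶠ P in nhdsWithin Pbar (stdSimplex ℝ (∀ i, A i)),
      P ∈ stdSimplex ℝ (∀ i, A i) := self_mem_nhdsWithin
  filter_upwards [(hev1.and hev2).filter_mono nhdsWithin_le_nhds, hmem] with P hP hPmem
  have hadm : MAdmissible u P i σ := fun j hj r => hP.2 j r hj
  exact lt_of_le_of_lt (mperf_le hPmem hadm) hP.1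

noncomputable def mperfSum (u : I → (∀ i, A i) → ℝ) (P : (∀ i, A i) → ℝ) : ℝ :=
  ∑ i : I, mperf u P i

lemma mperfSum_usc (u : I → (∀ i, A i) → ℝ) {Pbar : (∀ i, A i) → ℝ}
    (hPbar : Pbar ∈ stdSimplex ℝ (∀ i, A i)) {c : ℝ} (hc : mperfSum u Pbar < c) :
    ∀ᶠ P in nhdsWithin Pbar (stdSimplex ℝ (∀ i, A i)), mperfSum u P < c := by
  have hnpos : (0 : ℝ) < (Fintype.card I : ℝ) := by exact_mod_cast Fintype.card_pos
  have hδpos : 0 < (c - mperfSum u Pbar) / (Fintype.card I : ℝ) :=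
    div_pos (by linarith) hnpos
  have hev : ∀ᶠ P in nhdsWithin Pbar (stdSimplex ℝ (∀ i, A i)),
      ∀ i : I, mperf u P i < mperf u Pbar i + (c - mperfSum u Pbar) / (Fintype.card I : ℝ) := by
    rw [Filter.eventually_all]
    intro i
    exact mperf_usc u i hPbar (lt_add_of_pos_right _ hδpos)
  refine hev.mono fun P hP => ?_
  have h1 : mperfSum u P <
      ∑ i : I, (mperf u Pbar i + (c - mperfSum u Pbar) / (Fintype.card I : ℝ)) :=
    Finset.sum_lt_sum_of_nonempty Finset.univ_nonempty fun i _ => hP i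
  have hgdef : mperfSum u Pbar = ∑ i : I, mperf u Pbar i := rfl
  have h2 : ∑ i : I, (mperf u Pbar i + (c - mperfSum u Pbar) / (Fintype.card I : ℝ)) = c := by
    rw [Finset.sum_add_distrib, Finset.sum_const, Finset.card_univ, nsmul_eq_mul,
      mul_comm, div_mul_cancel₀ _ hnpos.ne', ← hgdef]
    ring
  linarith


theorem exists_mixed_correlated_optimin' (u : I → (∀ i, A i) → ℝ) :
    ∃ Pbar ∈ stdSimplex ℝ (∀ i, A i),
      ¬ ∃ Q ∈ stdSimplex ℝ (∀ i, A i),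
        (∀ i : I, mperf u Pbar i ≤ mperf u Q i) ∧
        (∃ i : I, mperf u Pbar i < mperf u Q i) := by
  set K := stdSimplex ℝ (∀ i, A i) with hK
  have hKc : IsCompact K := isCompact_stdSimplex _ _
  have hKne : K.Nonempty := by
    refine ⟨fun _ => 1 / (Fintype.card (∀ i, A i) : ℝ), fun a => by positivity, ?_⟩
    rw [Finset.sum_const, Finset.card_univ, nsmul_eq_mul]
    have : (0 : ℝ) < (Fintype.card (∀ i, A i) : ℝ) := by exact_mod_cast Fintype.card_pos
    field_simp
  have himgne : (mperfSum u '' K).Nonempty := hKne.image _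
  have himgbdd : BddAbove (mperfSum u '' K) := by
    refine ⟨∑ i : I, payoffBound u i, ?_⟩
    rintro x ⟨P, hP, rfl⟩
    exact Finset.sum_le_sum fun i _ => le_of_abs_le (abs_mperf_le u hP i)
  set s := sSup (mperfSum u '' K) with hs
  have hex : ∀ n : ℕ, ∃ P ∈ K, s - 1 / (n + 1 : ℝ) < mperfSum u P := by
    intro n
    have hlt : s - 1 / (n + 1 : ℝ) < s := by
      have : (0 : ℝ) < 1 / (n + 1 : ℝ) := by positivity
      linarith
    obtain ⟨x, ⟨P, hP, rfl⟩, hxlt⟩ := exists_lt_of_lt_csSup himgne hlt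
    exact ⟨P, hP, hxlt⟩
  choose Pseq hPmem hPlt using hex
  obtain ⟨Pbar, hPbar, φ, hφ, htend⟩ := hKc.tendsto_subseq hPmem
  have hsle : s ≤ mperfSum u Pbar := by
    by_contra h
    push_neg at h
    set c := (mperfSum u Pbar + s) / 2 with hc
    have hc1 : mperfSum u Pbar < c := by rw [hc]; linarith
    have hc2 : c < s := by rw [hc]; linarith
    have husc := mperfSum_usc u hPbar hc1
    have htend' : Filter.Tendsto (Pseq ∘ φ) Filter.atTop (nhdsWithin Pbar K) := by
      rw [tendsto_nhdsWithin_iff]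
      exact ⟨htend, Filter.Eventually.of_forall fun n => hPmem (φ n)⟩
    have hev : ∀ᶠ n in Filter.atTop, mperfSum u (Pseq (φ n)) < c := htend'.eventually husc
    obtain ⟨N, hN⟩ := exists_nat_one_div_lt (show (0:ℝ) < s - c by linarith)
    obtain ⟨n, hn1, hn2⟩ := (hev.and (Filter.eventually_ge_atTop N)).exists
    have hφn : N ≤ φ n := le_trans hn2 (hφ.le_apply)
    have h1 : 1 / ((φ n : ℝ) + 1) ≤ 1 / ((N : ℝ) + 1) := by
      apply one_div_le_one_div_of_le
      · positivity
      · exact_mod_cast Nat.add_le_add_right hφn 1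
    have := hPlt (φ n)
    have : s - (s - c) < mperfSum u (Pseq (φ n)) := by
      have h2 : 1 / ((φ n : ℝ) + 1) < s - c := lt_of_le_of_lt h1 hN
      linarith [hPlt (φ n)]
    linarith
  refine ⟨Pbar, hPbar, ?_⟩
  rintro ⟨Q, hQ, hle, i₀, hlt⟩
  have h1 : mperfSum u Pbar < mperfSum u Q :=
    Finset.sum_lt_sum (fun i _ => hle i) ⟨i₀, Finset.mem_univ i₀, hlt⟩
  have h2 : mperfSum u Q ≤ s := le_csSup himgbdd ⟨Q, hQ, rfl⟩
  linarith


/-- every finite game has a mixed-deviation correlated optimin,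
i.e. a distribution `P̄ ∈ Δ(A)` that is Pareto undominated with respect to
`(π_1^m, …, π_n^m)`. -/
theorem exists_mixed_correlated_optimin (u : I → (∀ i, A i) → ℝ) :
    ∃ Pbar ∈ stdSimplex ℝ (∀ i, A i),
      ¬ ∃ Q ∈ stdSimplex ℝ (∀ i, A i),
        (∀ i : I, mperf u Pbar i ≤ mperf u Q i) ∧
        (∃ i : I, mperf u Pbar i < mperf u Q i) := by
  exact exists_mixed_correlated_optimin' u
end

section
/- In a finite two-player game in which each player has exactly two pure actions, the mixed-deviation and pure-deviation correlated optimin performances coincide: π_i^m(P) = π_i(P) for every correlated distribution P ∈ Δ(A) and every player i. Consequently, the set of mixed-deviation correlated optimins equals the set of (pure-deviation) correlated optimins. -/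
open Finset

variable {A1 A2 : Type*} [Fintype A1] [Fintype A2] [DecidableEq A1] [DecidableEq A2]

/-- Player 1's unnormalized gain from switching recommendation `r` to the mixed
action `q`. -/
noncomputable def mgain1 (u1 : A1 × A2 → ℝ) (P : A1 × A2 → ℝ)
    (r : A1) (q : A1 → ℝ) : ℝ :=
  ∑ a2 : A2, P (r, a2) * ((∑ b : A1, q b * u1 (b, a2)) - u1 (r, a2))

/-- Player 2's unnormalized gain from switching recommendation `r` to the mixed
action `q`. -/
noncomputable def mgain2 (u2 : A1 × A2 → ℝ) (P : A1 × A2 → ℝ)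
    (r : A2) (q : A2 → ℝ) : ℝ :=
  ∑ a1 : A1, P (a1, r) * ((∑ b : A2, q b * u2 (a1, b)) - u2 (a1, r))

/-- Mixed-deviation correlated optimin performance of player 1. -/
noncomputable def mperf1 (u1 u2 : A1 × A2 → ℝ) (P : A1 × A2 → ℝ) : ℝ :=
  sInf {x | ∃ σ : A2 → A2 → ℝ,
    (∀ r : A2, σ r = pointMass r ∨
      (σ r ∈ stdSimplex ℝ A2 ∧ 0 < mgain2 u2 P r (σ r))) ∧
    x = ∑ a : A1 × A2, P a * ∑ b2 : A2, σ a.2 b2 * u1 (a.1, b2)}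

/-- Mixed-deviation correlated optimin performance of player 2. -/
noncomputable def mperf2 (u1 u2 : A1 × A2 → ℝ) (P : A1 × A2 → ℝ) : ℝ :=
  sInf {x | ∃ σ : A1 → A1 → ℝ,
    (∀ r : A1, σ r = pointMass r ∨
      (σ r ∈ stdSimplex ℝ A1 ∧ 0 < mgain1 u1 P r (σ r))) ∧
    x = ∑ a : A1 × A2, P a * ∑ b1 : A1, σ a.1 b1 * u2 (b1, a.2)}

lemma exists_other' {α : Type*} [Fintype α] [DecidableEq α] (h : Fintype.card α = 2)
    (r : α) : ∃ s, r ≠ s ∧ (Finset.univ : Finset α) = {r, s} := by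
  have h1 : 1 < Fintype.card α := by omega
  haveI : Nontrivial α := Fintype.one_lt_card_iff_nontrivial.mp h1
  obtain ⟨s, hs⟩ := exists_ne r
  refine ⟨s, hs.symm, ?_⟩
  refine (Finset.eq_of_subset_of_card_le (Finset.subset_univ _) ?_).symm
  rw [Finset.card_pair hs.symm, Finset.card_univ, h]

lemma pointMass_sum {α : Type*} [Fintype α] [DecidableEq α] (d : α) (f : α → ℝ) :
    ∑ b : α, pointMass d b * f b = f d := by
  simp [pointMass, ite_mul]

lemma pointMass_mem_stdSimplex {α : Type*} [Fintype α] [DecidableEq α] (d : α) :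
    pointMass d ∈ stdSimplex ℝ α := by
  constructor
  · intro x; unfold pointMass; positivity
  · simp [pointMass]

/-- Generic form of the key lemma: with two actions, the infimum over admissible
mixed deviation rules equals the infimum over admissible pure deviation rules. -/
lemma sInf_mixed_eq_pure {R C : Type*} [Fintype R] [Fintype C] [DecidableEq R]
    (hR : Fintype.card R = 2) (P' : R → C → ℝ) (U W : C → R → ℝ) :
    sInf {x | ∃ σ : R → R → ℝ,
      (∀ r, σ r = pointMass r ∨ (σ r ∈ stdSimplex ℝ R ∧
        0 < ∑ o : C, P' r o * ((∑ b : R, σ r b * U o b) - U o r))) ∧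
      x = ∑ r : R, ∑ o : C, P' r o * ∑ b : R, σ r b * W o b}
    = sInf {x | ∃ δ : R → R,
      (∀ r, δ r = r ∨ 0 < ∑ o : C, P' r o * (U o (δ r) - U o r)) ∧
      x = ∑ r : R, ∑ o : C, P' r o * W o (δ r)} := by
  set Sm := {x | ∃ σ : R → R → ℝ,
      (∀ r, σ r = pointMass r ∨ (σ r ∈ stdSimplex ℝ R ∧
        0 < ∑ o : C, P' r o * ((∑ b : R, σ r b * U o b) - U o r))) ∧
      x = ∑ r : R, ∑ o : C, P' r o * ∑ b : R, σ r b * W o b} with hSm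
  set Sp := {x | ∃ δ : R → R,
      (∀ r, δ r = r ∨ 0 < ∑ o : C, P' r o * (U o (δ r) - U o r)) ∧
      x = ∑ r : R, ∑ o : C, P' r o * W o (δ r)} with hSp
  have hsub : Sp ⊆ Sm := by
    rintro x ⟨δ, hδ, rfl⟩
    refine ⟨fun r => pointMass (δ r), fun r => ?_, ?_⟩
    · rcases hδ r with h | h
      · left; exact congrArg pointMass h
      · right
        refine ⟨pointMass_mem_stdSimplex _, ?_⟩
        simpa [pointMass_sum] using h
    · simp [pointMass_sum]
  have hne : Sp.Nonempty := ⟨_, fun r => r, fun r => Or.inl rfl, rfl⟩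
  have hbdd : BddBelow Sp := by
    have hfin : Sp ⊆ Set.range (fun δ : R → R => ∑ r : R, ∑ o : C, P' r o * W o (δ r)) := by
      rintro x ⟨δ, _, rfl⟩; exact ⟨δ, rfl⟩
    exact Set.Finite.bddBelow ((Set.finite_range _).subset hfin)
  have hlb : ∀ x ∈ Sm, sInf Sp ≤ x := by
    rintro x ⟨σ, hσ, rfl⟩
    have key : ∀ r : R, ∃ d : R, (d = r ∨ 0 < ∑ o : C, P' r o * (U o d - U o r)) ∧
        (∑ o : C, P' r o * W o d) ≤ ∑ o : C, P' r o * ∑ b : R, σ r b * W o b := by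
      intro r
      obtain ⟨s, hrs, huniv⟩ := exists_other' hR r
      have hsum2 : ∀ f : R → ℝ, ∑ b : R, f b = f r + f s := by
        intro f; rw [show (Finset.univ : Finset R) = {r, s} from huniv, Finset.sum_pair hrs]
      rcases hσ r with h | ⟨⟨hpos, hsum1⟩, hg⟩
      · refine ⟨r, Or.inl rfl, le_of_eq ?_⟩
        apply Finset.sum_congr rfl
        intro o _
        rw [h, pointMass_sum]
      · have h1 : σ r r + σ r s = 1 := by rw [← hsum2]; exact hsum1
        have hns : 0 ≤ σ r s := hpos s
        have hgain : (∑ o : C, P' r o * ((∑ b : R, σ r b * U o b) - U o r))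
            = σ r s * ∑ o : C, P' r o * (U o s - U o r) := by
          rw [Finset.mul_sum]
          apply Finset.sum_congr rfl
          intro o _
          rw [hsum2 (fun b => σ r b * U o b)]
          have : σ r r = 1 - σ r s := by linarith
          rw [this]; ring
        have hgs : 0 < ∑ o : C, P' r o * (U o s - U o r) := by
          rw [hgain] at hg
          by_contra hG
          push_neg at hG
          nlinarith
        have hval : (∑ o : C, P' r o * ∑ b : R, σ r b * W o b)
            = σ r r * (∑ o : C, P' r o * W o r) + σ r s * (∑ o : C, P' r o * W o s) := by
          rw [Finset.mul_sum, Finset.mul_sum, ← Finset.sum_add_distrib]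
          apply Finset.sum_congr rfl
          intro o _
          rw [hsum2 (fun b => σ r b * W o b)]
          ring
        have hnr : 0 ≤ σ r r := hpos r
        rcases le_total (∑ o : C, P' r o * W o r) (∑ o : C, P' r o * W o s) with hle | hle
        · refine ⟨r, Or.inl rfl, ?_⟩
          rw [hval]
          have hrr : σ r r = 1 - σ r s := by linarith
          rw [hrr]
          nlinarith [mul_nonneg hns (sub_nonneg.2 hle)]
        · refine ⟨s, Or.inr hgs, ?_⟩
          rw [hval]
          have hss : σ r s = 1 - σ r r := by linarith
          rw [hss]
          nlinarith [mul_nonneg hnr (sub_nonneg.2 hle)]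
    choose δ hδ1 hδ2 using key
    calc sInf Sp ≤ ∑ r : R, ∑ o : C, P' r o * W o (δ r) := csInf_le hbdd ⟨δ, hδ1, rfl⟩
    _ ≤ _ := Finset.sum_le_sum (fun r _ => hδ2 r)
  exact le_antisymm (csInf_le_csInf ⟨sInf Sp, hlb⟩ hne hsub) (le_csInf (hne.mono hsub) hlb)

lemma sum_prod_swap' (f : A1 × A2 → ℝ) :
    ∑ a : A1 × A2, f a = ∑ r : A2, ∑ o : A1, f (o, r) := by
  rw [Fintype.sum_prod_type]; exact Finset.sum_comm

lemma mperf1_eq_perf1 (h2 : Fintype.card A2 = 2) (u1 u2 : A1 × A2 → ℝ) (P : A1 × A2 → ℝ) :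
    mperf1 u1 u2 P = perf1 u1 u2 P := by
  unfold mperf1 perf1 mgain2 gain2
  simp only [sum_prod_swap']
  exact sInf_mixed_eq_pure (R := A2) (C := A1) h2 (fun r o => P (o, r))
    (fun o b => u2 (o, b)) (fun o b => u1 (o, b))

lemma mperf2_eq_perf2 (h1 : Fintype.card A1 = 2) (u1 u2 : A1 × A2 → ℝ) (P : A1 × A2 → ℝ) :
    mperf2 u1 u2 P = perf2 u1 u2 P := by
  unfold mperf2 perf2 mgain1 gain1
  simp only [Fintype.sum_prod_type]
  exact sInf_mixed_eq_pure (R := A1) (C := A2) h1 (fun r o => P (r, o))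
    (fun o b => u1 (b, o)) (fun o b => u2 (b, o))

/-- in a two-player game in which each player has exactly two pure
actions, the mixed-deviation and pure-deviation correlated optimin performances
coincide for every correlated distribution and every player; consequently the
mixed-deviation and pure-deviation correlated optimin sets coincide. -/
theorem mixed_eq_pure_perf_of_two_by_two
    (h1 : Fintype.card A1 = 2) (h2 : Fintype.card A2 = 2)
    (u1 u2 : A1 × A2 → ℝ) :
    (∀ P ∈ stdSimplex ℝ (A1 × A2),
      mperf1 u1 u2 P = perf1 u1 u2 P ∧ mperf2 u1 u2 P = perf2 u1 u2 P) ∧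
    (∀ P ∈ stdSimplex ℝ (A1 × A2),
      ((¬ ∃ Q ∈ stdSimplex ℝ (A1 × A2),
          (mperf1 u1 u2 P ≤ mperf1 u1 u2 Q ∧ mperf2 u1 u2 P ≤ mperf2 u1 u2 Q) ∧
          (mperf1 u1 u2 P < mperf1 u1 u2 Q ∨ mperf2 u1 u2 P < mperf2 u1 u2 Q)) ↔
       (¬ ∃ Q ∈ stdSimplex ℝ (A1 × A2),
          (perf1 u1 u2 P ≤ perf1 u1 u2 Q ∧ perf2 u1 u2 P ≤ perf2 u1 u2 Q) ∧
          (perf1 u1 u2 P < perf1 u1 u2 Q ∨ perf2 u1 u2 P < perf2 u1 u2 Q)))) := by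
  constructor
  · intro P _
    exact ⟨mperf1_eq_perf1 h2 u1 u2 P, mperf2_eq_perf2 h1 u1 u2 P⟩
  · intro P _
    simp only [mperf1_eq_perf1 h2 u1 u2, mperf2_eq_perf2 h1 u1 u2]
end
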